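/- arXiv:2512.19878 — 9 statements merged into one kernel-verified Lean document; each statement's English description precedes it below -/
import Mathlib

section
/- Let n ≥ 1, k > -1, b > 0, q > 0, ℓ > 0 be real constants. Define I(t) = t^q · ∫₀^∞ s^k / (1 + b·t^{n/2}·exp(s))^ℓ ds for t > 0. Then I(t) → 0 as t → 0+. -/
open Real Filter Topology MeasureTheory Set

theorem stmt_0 (n k b q ℓ : ℝ) (hn : 1 ≤ n) (hk : -1 < k) (hb : 0 < b)
    (hq : 0 < q) (hl : 0 < ℓ) :
    Tendsto (fun t : ℝ =>
        t ^ q * ∫ s in Ioi (0:ℝ), s ^ k / (1 + b * t ^ (n/2) * Real.exp s) ^ ℓ)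
      (𝓝[>] 0) (𝓝 0) := by
  have hn0 : (0:ℝ) < n := lt_of_lt_of_le one_pos hn
  set ε : ℝ := min ℓ (q / n) with hεdef
  have hε : 0 < ε := lt_min hl (div_pos hq hn0)
  have hεℓ : ε ≤ ℓ := min_le_left _ _
  have hexp : 0 < q - ε * (n / 2) := by
    have h1 : ε ≤ q / n := min_le_right _ _
    have : ε * n ≤ q := by
      rw [← div_mul_cancel₀ q (ne_of_gt hn0)]
      exact mul_le_mul_of_nonneg_right h1 hn0.le
    nlinarith
  -- integrability of s^k * exp(-ε s)
  have hG : IntegrableOn (fun s : ℝ => s ^ k * Real.exp (-ε * s)) (Ioi 0) := by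
    have := integrableOn_rpow_mul_exp_neg_mul_rpow (p := 1) hk one_pos hε
    refine this.congr_fun (fun s hs => ?_) measurableSet_Ioi
    simp only [Real.rpow_one]
  set G : ℝ := ∫ s in Ioi (0:ℝ), s ^ k * Real.exp (-ε * s) with hGdef
  have hGnonneg : 0 ≤ G := by
    apply setIntegral_nonneg measurableSet_Ioi
    intro s hs
    exact mul_nonneg (Real.rpow_nonneg (le_of_lt hs) _) (Real.exp_pos _).le
  -- key pointwise bound : (1+x)^{-ℓ} ≤ x^{-ε} for x > 0
  have key : ∀ x : ℝ, 0 < x → (1 + x) ^ ℓ ≥ x ^ ε := by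
    intro x hx
    rcases le_total x 1 with h | h
    · calc x ^ ε ≤ 1 ^ ε := Real.rpow_le_rpow hx.le h hε.le
        _ = 1 := Real.one_rpow _
        _ ≤ (1 + x) ^ ℓ := Real.one_le_rpow (by linarith) hl.le
    · calc x ^ ε ≤ x ^ ℓ := Real.rpow_le_rpow_of_exponent_le h hεℓ
        _ ≤ (1 + x) ^ ℓ := Real.rpow_le_rpow (by linarith) (by linarith) hl.le
  -- the upper bound function
  have upper : ∀ t : ℝ, t ∈ Ioi (0:ℝ) →
      t ^ q * ∫ s in Ioi (0:ℝ), s ^ k / (1 + b * t ^ (n/2) * Real.exp s) ^ ℓ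
        ≤ b ^ (-ε) * G * t ^ (q - ε * (n/2)) := by
    intro t ht
    have ht0 : 0 < t := ht
    have htn : 0 < t ^ (n/2) := Real.rpow_pos_of_pos ht0 _
    have hInt : (∫ s in Ioi (0:ℝ), s ^ k / (1 + b * t ^ (n/2) * Real.exp s) ^ ℓ)
        ≤ (b * t ^ (n/2)) ^ (-ε) * G := by
      have hbd : ∀ s ∈ Ioi (0:ℝ),
          s ^ k / (1 + b * t ^ (n/2) * Real.exp s) ^ ℓ
            ≤ (b * t ^ (n/2)) ^ (-ε) * (s ^ k * Real.exp (-ε * s)) := by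
        intro s hs
        have hs0 : 0 < s := hs
        have hx : 0 < b * t ^ (n/2) * Real.exp s :=
          mul_pos (mul_pos hb htn) (Real.exp_pos _)
        have h1 : (b * t ^ (n/2) * Real.exp s) ^ ε ≤ (1 + b * t ^ (n/2) * Real.exp s) ^ ℓ :=
          key _ hx
        have h2 : s ^ k / (1 + b * t ^ (n/2) * Real.exp s) ^ ℓ
            ≤ s ^ k / (b * t ^ (n/2) * Real.exp s) ^ ε := by
          apply div_le_div_of_nonneg_left (Real.rpow_nonneg hs0.le _)
            (Real.rpow_pos_of_pos hx _) h1
        refine h2.trans (le_of_eq ?_)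
        rw [Real.mul_rpow (mul_pos hb htn).le (Real.exp_pos s).le,
          ← Real.exp_mul, div_eq_mul_inv, mul_inv, ← Real.rpow_neg (mul_pos hb htn).le,
          ← Real.exp_neg]
        ring_nf
      have hgint : IntegrableOn
          (fun s : ℝ => (b * t ^ (n/2)) ^ (-ε) * (s ^ k * Real.exp (-ε * s))) (Ioi 0) :=
        hG.const_mul _
      calc (∫ s in Ioi (0:ℝ), s ^ k / (1 + b * t ^ (n/2) * Real.exp s) ^ ℓ)
          ≤ ∫ s in Ioi (0:ℝ), (b * t ^ (n/2)) ^ (-ε) * (s ^ k * Real.exp (-ε * s)) := by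
            apply integral_mono_of_nonneg
            · filter_upwards [ae_restrict_mem measurableSet_Ioi] with s hs
              exact div_nonneg (Real.rpow_nonneg (le_of_lt hs) _)
                (Real.rpow_nonneg (by positivity) _)
            · exact hgint
            · filter_upwards [ae_restrict_mem measurableSet_Ioi] with s hs
              exact hbd s hs
        _ = (b * t ^ (n/2)) ^ (-ε) * G := by rw [integral_const_mul]
    calc t ^ q * ∫ s in Ioi (0:ℝ), s ^ k / (1 + b * t ^ (n/2) * Real.exp s) ^ ℓ
        ≤ t ^ q * ((b * t ^ (n/2)) ^ (-ε) * G) := by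
          apply mul_le_mul_of_nonneg_left hInt (Real.rpow_nonneg ht0.le _)
      _ = b ^ (-ε) * G * t ^ (q - ε * (n/2)) := by
          rw [Real.mul_rpow hb.le htn.le, ← Real.rpow_mul ht0.le,
            show q - ε * (n/2) = q + n/2 * (-ε) by ring, Real.rpow_add ht0]
          ring
  -- lower bound : nonnegativity
  have lower : ∀ t : ℝ, t ∈ Ioi (0:ℝ) →
      0 ≤ t ^ q * ∫ s in Ioi (0:ℝ), s ^ k / (1 + b * t ^ (n/2) * Real.exp s) ^ ℓ := by
    intro t ht
    apply mul_nonneg (Real.rpow_nonneg (le_of_lt ht) _)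
    apply setIntegral_nonneg measurableSet_Ioi
    intro s hs
    have h0 : (0:ℝ) ≤ 1 + b * t ^ (n/2) * Real.exp s :=
      add_nonneg one_pos.le (mul_nonneg (mul_nonneg hb.le
        (Real.rpow_nonneg (le_of_lt ht) _)) (Real.exp_pos s).le)
    exact div_nonneg (Real.rpow_nonneg (le_of_lt hs) _) (Real.rpow_nonneg h0 _)
  -- upper bound tends to 0
  have htend : Tendsto (fun t : ℝ => b ^ (-ε) * G * t ^ (q - ε * (n/2))) (𝓝[>] 0) (𝓝 0) := by
    have h1 : Tendsto (fun t : ℝ => t ^ (q - ε * (n/2))) (𝓝[>] 0) (𝓝 0) := by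
      have := (Real.continuousAt_rpow_const 0 (q - ε * (n/2)) (Or.inr hexp.le)).continuousWithinAt
        (s := Ioi (0:ℝ))
      simpa [Real.zero_rpow (ne_of_gt hexp), ContinuousWithinAt] using this
    simpa using h1.const_mul (b ^ (-ε) * G)
  refine squeeze_zero' ?_ ?_ htend
  · filter_upwards [self_mem_nhdsWithin] with t ht using lower t ht
  · filter_upwards [self_mem_nhdsWithin] with t ht using upper t ht
end

section
/- Let n ≥ 1, b > 0, c > -1, ℓ > 0 and d > -(c+1)/2 be real constants, and let μ > 0. Define J(t) = t^d · ∫₀^∞ r^c / (1 + b·t^{n/2}·exp(r²/(4μt)))^ℓ dr for t > 0. Then J(t) → 0 as t → 0+. -/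
open Real Filter Topology MeasureTheory Set

theorem stmt_1 (n b c ℓ d μ : ℝ) (hn : 1 ≤ n) (hb : 0 < b) (hc : -1 < c)
    (hl : 0 < ℓ) (hd : -(c+1)/2 < d) (hμ : 0 < μ) :
    Tendsto (fun t : ℝ =>
        t ^ d * ∫ r in Ioi (0:ℝ),
          r ^ c / (1 + b * t ^ (n/2) * Real.exp (r^2 / (4*μ*t))) ^ ℓ)
      (𝓝[>] 0) (𝓝 0) := by
  have hn0 : (0:ℝ) < n := lt_of_lt_of_le one_pos hn
  set δ : ℝ := d + (c+1)/2 with hδdef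
  have hδ : 0 < δ := by simp only [hδdef]; linarith
  set ε : ℝ := min ℓ (δ / n) with hεdef
  have hε : 0 < ε := lt_min hl (div_pos hδ hn0)
  have hεl : ε ≤ ℓ := min_le_left _ _
  have hεδ : n * ε / 2 ≤ δ / 2 := by
    have h1 : ε ≤ δ / n := min_le_right _ _
    linarith [mul_le_mul_of_nonneg_left h1 hn0.le, div_mul_cancel₀ δ hn0.ne']
  set q : ℝ := δ - n * ε / 2 with hqdef
  have hq : 0 < q := by simp only [hqdef]; linarith
  set C : ℝ := b ^ (-ε) * ((ε / (4*μ)) ^ (-(c+1)/2) * (1/2) * Real.Gamma ((c+1)/2)) with hCdef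
  have hΓ : 0 < Real.Gamma ((c+1)/2) := Real.Gamma_pos_of_pos (by linarith)
  have hC : 0 ≤ C := by
    apply mul_nonneg (Real.rpow_nonneg hb.le _)
    apply mul_nonneg (mul_nonneg (Real.rpow_nonneg (by positivity) _) (by norm_num)) hΓ.le
  -- squeeze
  apply squeeze_zero' (g := fun t => C * t ^ q)
  · filter_upwards [self_mem_nhdsWithin] with t (ht : 0 < t)
    apply mul_nonneg (Real.rpow_nonneg ht.le _)
    apply setIntegral_nonneg measurableSet_Ioi
    intro r hr
    have hr0 : (0:ℝ) < r := hr
    positivity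
  · filter_upwards [self_mem_nhdsWithin] with t (ht : 0 < t)
    have hat : 0 < ε / (4*μ*t) := by positivity
    -- the dominating function
    set g : ℝ → ℝ := fun r => b ^ (-ε) * t ^ (-(n*ε/2)) * (r ^ c * Real.exp (-(ε/(4*μ*t)) * r^2)) with hgdef
    have hgint : IntegrableOn g (Ioi 0) :=
      ((integrableOn_rpow_mul_exp_neg_mul_sq hat hc).const_mul _)
    have hbound : ∫ r in Ioi (0:ℝ),
          r ^ c / (1 + b * t ^ (n/2) * Real.exp (r^2 / (4*μ*t))) ^ ℓ ≤ ∫ r in Ioi (0:ℝ), g r := by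
      apply integral_mono_of_nonneg
      · filter_upwards [ae_restrict_mem measurableSet_Ioi] with r hr
        have hr0 : (0:ℝ) < r := hr
        positivity
      · exact hgint
      · filter_upwards [ae_restrict_mem measurableSet_Ioi] with r hr
        have hr0 : (0:ℝ) < r := hr
        set X : ℝ := b * t ^ (n/2) * Real.exp (r^2 / (4*μ*t)) with hXdef
        have hX : 0 < X := by positivity
        have h1 : X ^ ε ≤ (1 + X) ^ ℓ := by
          calc X ^ ε ≤ (1 + X) ^ ε :=
                Real.rpow_le_rpow hX.le (by linarith) hε.le
            _ ≤ (1 + X) ^ ℓ :=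
                Real.rpow_le_rpow_of_exponent_le (by linarith) hεl
        have h2 : r ^ c / (1 + X) ^ ℓ ≤ r ^ c / X ^ ε := by
          apply div_le_div_of_nonneg_left (Real.rpow_nonneg hr0.le _) _ h1
          exact Real.rpow_pos_of_pos hX _
        refine h2.trans_eq ?_
        have hXε : X ^ ε = b ^ ε * t ^ (n*ε/2) * Real.exp ((ε/(4*μ*t)) * r^2) := by
          rw [hXdef, Real.mul_rpow (by positivity) (by positivity),
            Real.mul_rpow hb.le (by positivity), ← Real.rpow_mul ht.le, ← Real.exp_mul,
            show n/2*ε = n*ε/2 from by ring,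
            show r^2/(4*μ*t)*ε = ε/(4*μ*t)*r^2 from by ring]
        rw [hXε]
        simp only [hgdef, Real.rpow_neg hb.le, Real.rpow_neg ht.le, neg_mul, Real.exp_neg]
        rw [div_eq_iff (by positivity)]
        field_simp
    calc t ^ d * ∫ r in Ioi (0:ℝ),
          r ^ c / (1 + b * t ^ (n/2) * Real.exp (r^2 / (4*μ*t))) ^ ℓ
        ≤ t ^ d * ∫ r in Ioi (0:ℝ), g r := by
          exact mul_le_mul_of_nonneg_left hbound (Real.rpow_nonneg ht.le _)
      _ = C * t ^ q := by
          have hval : ∫ r in Ioi (0:ℝ), r ^ c * Real.exp (-(ε/(4*μ*t)) * r^2)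
              = (ε/(4*μ*t)) ^ (-(c+1)/2) * (1/2) * Real.Gamma ((c+1)/2) := by
            rw [← integral_rpow_mul_exp_neg_mul_rpow (p := 2) (q := c) (b := ε/(4*μ*t))
              two_pos hc hat]
            refine setIntegral_congr_fun measurableSet_Ioi (fun x hx => ?_)
            norm_num [Real.rpow_two]
          rw [hgdef]
          simp only []
          rw [integral_const_mul, hval]
          have hsplit : (ε/(4*μ*t)) ^ (-(c+1)/2) = (ε/(4*μ)) ^ (-(c+1)/2) * t ^ ((c+1)/2) := by
            have hA : (0:ℝ) < ε/(4*μ) := by positivity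
            rw [show ε/(4*μ*t) = (ε/(4*μ)) / t from (div_div ε (4*μ) t).symm,
              Real.div_rpow hA.le ht.le,
              show (-(c+1)/2 : ℝ) = -((c+1)/2) from by ring,
              Real.rpow_neg ht.le, div_eq_mul_inv, inv_inv]
          rw [hsplit, hCdef]
          have ht1 : t ^ d * (t ^ (-(n*ε/2)) * t ^ ((c+1)/2)) = t ^ q := by
            rw [← Real.rpow_add ht, ← Real.rpow_add ht, hqdef, hδdef]
            congr 1; ring
          calc t ^ d * (b ^ (-ε) * t ^ (-(n*ε/2)) *
                ((ε/(4*μ)) ^ (-(c+1)/2) * t ^ ((c+1)/2) * (1/2) * Real.Gamma ((c+1)/2)))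
              = (b ^ (-ε) * ((ε/(4*μ)) ^ (-(c+1)/2) * (1/2) * Real.Gamma ((c+1)/2))) *
                (t ^ d * (t ^ (-(n*ε/2)) * t ^ ((c+1)/2))) := by ring
            _ = _ := by rw [ht1]
  · have h0 : Tendsto (fun t : ℝ => t ^ q) (𝓝[>] (0:ℝ)) (𝓝 0) := by
      have := (Real.continuousAt_rpow_const 0 q (Or.inr hq.le)).tendsto
      rw [Real.zero_rpow hq.ne'] at this
      exact this.mono_left nhdsWithin_le_nhds
    simpa using h0.const_mul C
end

section
/- Let n ≥ 2, μ > 0, a > 0, and 1 ≤ p < n. Define ū(t,r) = r / (t·(1 + a·(4πμt)^{n/2}·exp(r²/(4μt)))) for t, r > 0. Then ∫₀^∞ |ū(t,r)|^p · r^{n-1} dr → 0 as t → 0+. -/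
open Real Filter Topology MeasureTheory Set

theorem stmt_2 (n : ℕ) (hn : 2 ≤ n) (μ a p : ℝ) (hμ : 0 < μ) (ha : 0 < a)
    (hp1 : 1 ≤ p) (hpn : p < n) :
    Tendsto (fun t : ℝ =>
        ∫ r in Ioi (0:ℝ),
          |r / (t * (1 + a * (4*π*μ*t) ^ ((n:ℝ)/2) * Real.exp (r^2/(4*μ*t))))| ^ p
            * r ^ ((n:ℝ) - 1))
      (𝓝[>] 0) (𝓝 0) := by
  have hπ : (0:ℝ) < π := pi_pos
  have hn0 : (0:ℝ) < n := by positivity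
  have hn2 : (2:ℝ) ≤ n := by exact_mod_cast hn
  have hp0 : (0:ℝ) < p := lt_of_lt_of_le one_pos hp1
  set β : ℝ := ((n:ℝ) - p)/(2*n) with hβdef
  have hβ0 : 0 < β := div_pos (by linarith) (by positivity)
  have hβp : β ≤ p := by
    rw [hβdef, div_le_iff₀ (by positivity)]
    nlinarith
  set δ : ℝ := ((n:ℝ) - p)/4 with hδdef
  have hδ0 : 0 < δ := div_pos (by linarith) (by norm_num)
  have hΓ : 0 < Real.Gamma (((n:ℝ)+p)/2) :=
    Real.Gamma_pos_of_pos (by positivity)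
  set C : ℝ := a^(-β) * (4*π*μ)^(-((n:ℝ)/2*β)) *
      ((β/(4*μ))^(-(((n:ℝ)+p)/2)) * (1/2) * Real.Gamma (((n:ℝ)+p)/2)) with hCdef
  have hC : 0 ≤ C := by
    rw [hCdef]
    have h1 : (0:ℝ) ≤ a ^ (-β) := Real.rpow_nonneg ha.le _
    have h2 : (0:ℝ) ≤ (4*π*μ) ^ (-((n:ℝ)/2*β)) := Real.rpow_nonneg (by positivity) _
    have h3 : (0:ℝ) ≤ (β/(4*μ)) ^ (-(((n:ℝ)+p)/2)) := Real.rpow_nonneg (by positivity) _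
    nlinarith [hΓ.le, mul_nonneg h1 h2, mul_nonneg (mul_nonneg h3 (by norm_num : (0:ℝ) ≤ 1/2)) hΓ.le]
  have key : ∀ t : ℝ, 0 < t →
      (∫ r in Ioi (0:ℝ),
          |r / (t * (1 + a * (4*π*μ*t) ^ ((n:ℝ)/2) * Real.exp (r^2/(4*μ*t))))| ^ p
            * r ^ ((n:ℝ) - 1)) ≤ C * t ^ δ := by
    intro t ht
    set b : ℝ := β/(4*μ*t) with hbdef
    have hb : 0 < b := by positivity
    set K : ℝ := a^(-β) * (4*π*μ)^(-((n:ℝ)/2*β)) * t^(-(p + (n:ℝ)/2*β)) with hKdef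
    have hK : 0 ≤ K := by positivity
    have hs : (-1:ℝ) < (n:ℝ) + p - 1 := by linarith
    have hgint : IntegrableOn (fun r : ℝ => K * (r ^ ((n:ℝ)+p-1) * Real.exp (-b * r^2)))
        (Ioi 0) volume :=
      (integrableOn_rpow_mul_exp_neg_mul_sq hb hs).const_mul K
    have hpt : ∀ r ∈ Ioi (0:ℝ),
        |r / (t * (1 + a * (4*π*μ*t) ^ ((n:ℝ)/2) * Real.exp (r^2/(4*μ*t))))| ^ p
            * r ^ ((n:ℝ) - 1)
          ≤ K * (r ^ ((n:ℝ)+p-1) * Real.exp (-b * r^2)) := by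
      intro r hr
      rw [mem_Ioi] at hr
      set X : ℝ := a * (4*π*μ*t) ^ ((n:ℝ)/2) * Real.exp (r^2/(4*μ*t)) with hXdef
      have hX : 0 < X := by positivity
      have hden : 0 < t * (1 + X) := by positivity
      have hXβ : X ^ β ≤ (1 + X) ^ p := by
        have h1 : X ^ (β/p) ≤ 1 + X := by
          rcases le_total X 1 with hX1 | hX1
          · have := Real.rpow_le_one hX.le hX1 (by positivity : 0 ≤ β/p)
            linarith
          · have h2 : X ^ (β/p) ≤ X ^ (1:ℝ) :=
              Real.rpow_le_rpow_of_exponent_le hX1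
                (by rw [div_le_one hp0]; exact hβp)
            rw [Real.rpow_one] at h2
            linarith
        calc X ^ β = (X ^ (β/p)) ^ p := by
              rw [← Real.rpow_mul hX.le, div_mul_cancel₀ _ hp0.ne']
          _ ≤ (1 + X) ^ p :=
              Real.rpow_le_rpow (Real.rpow_nonneg hX.le _) h1 hp0.le
      have habs : |r / (t * (1 + X))| = r / (t * (1 + X)) :=
        abs_of_pos (by positivity)
      have e1 : ((4*π*μ*t) ^ ((n:ℝ)/2)) ^ β = (4*π*μ)^((n:ℝ)/2*β) * t^((n:ℝ)/2*β) := by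
        rw [← Real.rpow_mul (by positivity : (0:ℝ) ≤ 4*π*μ*t),
          Real.mul_rpow (by positivity : (0:ℝ) ≤ 4*π*μ) ht.le]
      have e2 : (Real.exp (r^2/(4*μ*t))) ^ β = Real.exp (r^2/(4*μ*t) * β) :=
        (Real.exp_mul _ _).symm
      have hXβval : X ^ β = a^β * ((4*π*μ)^((n:ℝ)/2*β) * t^((n:ℝ)/2*β)) *
          Real.exp (r^2/(4*μ*t) * β) := by
        rw [hXdef, Real.mul_rpow (by positivity) (Real.exp_pos _).le,
          Real.mul_rpow ha.le (by positivity), e1, e2]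
      calc |r / (t * (1 + X))| ^ p * r ^ ((n:ℝ) - 1)
          = r ^ p / (t ^ p * (1 + X) ^ p) * r ^ ((n:ℝ) - 1) := by
            rw [habs, Real.div_rpow hr.le hden.le, Real.mul_rpow ht.le (by positivity)]
        _ ≤ r ^ p / (t ^ p * X ^ β) * r ^ ((n:ℝ) - 1) := by
            gcongr
        _ = K * (r ^ ((n:ℝ)+p-1) * Real.exp (-b * r^2)) := by
            have hrr : r ^ p * r ^ ((n:ℝ) - 1) = r ^ ((n:ℝ)+p-1) := by
              rw [← Real.rpow_add hr]; ring_nf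
            have hexp : Real.exp (-b * r^2) = (Real.exp (r^2/(4*μ*t) * β))⁻¹ := by
              rw [← Real.exp_neg]
              congr 1
              rw [hbdef]
              field_simp
            have htK : t^(-(p + (n:ℝ)/2*β)) = (t^p)⁻¹ * (t^((n:ℝ)/2*β))⁻¹ := by
              rw [show -(p + (n:ℝ)/2*β) = -p + -((n:ℝ)/2*β) by ring,
                Real.rpow_add ht, Real.rpow_neg ht.le, Real.rpow_neg ht.le]
            rw [hKdef, hXβval, htK, Real.rpow_neg ha.le,
              Real.rpow_neg (by positivity : (0:ℝ) ≤ 4*π*μ), hexp, ← hrr]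
            have h1 : (0:ℝ) < a ^ β := Real.rpow_pos_of_pos ha β
            have h2 : (0:ℝ) < (4*π*μ) ^ ((n:ℝ)/2*β) := Real.rpow_pos_of_pos (by positivity) _
            have h3 : (0:ℝ) < t ^ p := Real.rpow_pos_of_pos ht p
            have h4 : (0:ℝ) < t ^ ((n:ℝ)/2*β) := Real.rpow_pos_of_pos ht _
            have h5 : (0:ℝ) < Real.exp (r^2/(4*μ*t) * β) := Real.exp_pos _
            field_simp
    have hval : ∫ r in Ioi (0:ℝ), r ^ ((n:ℝ)+p-1) * Real.exp (-b * r^2)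
        = b ^ (-(((n:ℝ)+p))/2) * (1/2) * Real.Gamma (((n:ℝ)+p)/2) := by
      have h := integral_rpow_mul_exp_neg_mul_rpow (p := 2) (q := (n:ℝ)+p-1)
        two_pos hs hb
      simp_rw [Real.rpow_two] at h
      rw [h]
      norm_num
    have hineq : (∫ r in Ioi (0:ℝ),
        |r / (t * (1 + a * (4*π*μ*t) ^ ((n:ℝ)/2) * Real.exp (r^2/(4*μ*t))))| ^ p
          * r ^ ((n:ℝ) - 1))
        ≤ ∫ r in Ioi (0:ℝ), K * (r ^ ((n:ℝ)+p-1) * Real.exp (-b * r^2)) := by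
      refine integral_mono_of_nonneg ?_ hgint ?_
      · filter_upwards [ae_restrict_mem measurableSet_Ioi] with r hr
        rw [mem_Ioi] at hr
        positivity
      · filter_upwards [ae_restrict_mem measurableSet_Ioi] with r hr
        exact hpt r hr
    rw [integral_const_mul, hval] at hineq
    refine hineq.trans_eq ?_
    have hbval : b ^ (-(((n:ℝ)+p))/2) =
        (β/(4*μ))^(-(((n:ℝ)+p)/2)) * t ^ (((n:ℝ)+p)/2) := by
      have : b = (β/(4*μ)) / t := by rw [hbdef]; field_simp
      rw [this, Real.div_rpow (by positivity) ht.le,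
        show -(((n:ℝ)+p))/2 = -(((n:ℝ)+p)/2) by ring,
        Real.rpow_neg (by positivity : (0:ℝ) ≤ β/(4*μ)), Real.rpow_neg ht.le,
        div_eq_mul_inv, inv_inv]
    rw [hKdef, hCdef, hbval]
    have htδ : t^(-(p + (n:ℝ)/2*β)) * t ^ (((n:ℝ)+p)/2) = t ^ δ := by
      rw [← Real.rpow_add ht, hδdef, hβdef]
      congr 1
      field_simp
      ring
    rw [← htδ]
    ring
  apply squeeze_zero' (g := fun t => C * t ^ δ)
  · filter_upwards [self_mem_nhdsWithin] with t ht
    refine setIntegral_nonneg measurableSet_Ioi fun r hr => ?_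
    rw [mem_Ioi] at hr
    positivity
  · filter_upwards [self_mem_nhdsWithin] with t ht
    exact key t ht
  · have h1 : Tendsto (fun t : ℝ => t ^ δ) (𝓝[>] 0) (𝓝 0) := by
      have hc : ContinuousAt (fun t : ℝ => t ^ δ) 0 :=
        (Real.continuousAt_rpow_const 0 δ (Or.inr hδ0.le))
      have := hc.tendsto
      rw [Real.zero_rpow hδ0.ne'] at this
      exact this.mono_left nhdsWithin_le_nhds
    simpa using h1.const_mul C
end

section
/- Let n ≥ 2, μ > 0, a > 0 and define ū(t,r) = r/(t(1 + A e^ξ)) with A = a(4πμt)^{n/2}, ξ = r²/(4μt). For fixed t̄ > 0, with Ā = a(4πμ t̄)^{n/2}: (i) ū(t,r)/r → 1/(t̄(1+Ā)), (ii) ∂_r(ū(t,r)/r) → 0, and (iii) (1/r)∂_r[(1/r)∂_r(ū(t,r)/r)] → Ā(Ā−1)/(4μ²t̄³(1+Ā)³), as (t,r) → (t̄, 0+). -/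
open Real Filter Topology MeasureTheory Set

private lemma hasDerivAt_exp_sq (μ t ρ : ℝ) :
    HasDerivAt (fun ρ' : ℝ => Real.exp (ρ'^2/(4*μ*t)))
      (Real.exp (ρ^2/(4*μ*t)) * (2*ρ/(4*μ*t))) ρ := by
  have h1 : HasDerivAt (fun ρ' : ℝ => ρ'^2/(4*μ*t)) (2*ρ/(4*μ*t)) ρ := by
    simpa using (hasDerivAt_pow 2 ρ).div_const (4*μ*t)
  exact h1.exp

private lemma L1 (μ A t : ℝ) (hμ : 0 < μ) (hA : 0 < A) (ht : 0 < t) {ρ : ℝ} (hρ : ρ ≠ 0) :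
    deriv (fun ρ' => ρ' / (t * (1 + A * Real.exp (ρ'^2/(4*μ*t)))) / ρ') ρ
      = -(A * Real.exp (ρ^2/(4*μ*t)) * ρ)
        / (2*μ*t^2*(1 + A * Real.exp (ρ^2/(4*μ*t)))^2) := by
  have hE := hasDerivAt_exp_sq μ t ρ
  have hD : HasDerivAt (fun ρ' => t * (1 + A * Real.exp (ρ'^2/(4*μ*t))))
      (t * (A * (Real.exp (ρ^2/(4*μ*t)) * (2*ρ/(4*μ*t))))) ρ :=
    ((hE.const_mul A).const_add 1).const_mul t
  have hDpos : 0 < t * (1 + A * Real.exp (ρ^2/(4*μ*t))) := by positivity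
  have hinv := hD.inv hDpos.ne'
  have heq : (fun ρ' => ρ' / (t * (1 + A * Real.exp (ρ'^2/(4*μ*t)))) / ρ')
      =ᶠ[𝓝 ρ] fun ρ' => (t * (1 + A * Real.exp (ρ'^2/(4*μ*t))))⁻¹ := by
    filter_upwards [eventually_ne_nhds hρ] with x hx
    rw [div_div, mul_comm, ← div_div, div_self hx, one_div]
  rw [heq.deriv_eq, (show HasDerivAt (fun ρ' => (t * (1 + A * Real.exp (ρ'^2/(4*μ*t))))⁻¹) _ ρ from hinv).deriv]
  have h1 : (0:ℝ) < 1 + A * Real.exp (ρ^2/(4*μ*t)) := by positivity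
  field_simp
  ring

private lemma L2 (μ A t : ℝ) (hμ : 0 < μ) (hA : 0 < A) (ht : 0 < t) {ρ : ℝ} (hρ : 0 < ρ) :
    deriv (fun ρ' => (1/ρ') * deriv (fun ρ'' => ρ'' / (t * (1 + A * Real.exp (ρ''^2/(4*μ*t)))) / ρ'') ρ') ρ
      = A * Real.exp (ρ^2/(4*μ*t)) * (A * Real.exp (ρ^2/(4*μ*t)) - 1) * ρ
        / (4*μ^2*t^3*(1 + A * Real.exp (ρ^2/(4*μ*t)))^3) := by
  have heq : (fun ρ' => (1/ρ') * deriv (fun ρ'' => ρ'' / (t * (1 + A * Real.exp (ρ''^2/(4*μ*t)))) / ρ'') ρ')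
      =ᶠ[𝓝 ρ] fun ρ' => -(A * Real.exp (ρ'^2/(4*μ*t)))
        / (2*μ*t^2*(1 + A * Real.exp (ρ'^2/(4*μ*t)))^2) := by
    filter_upwards [isOpen_Ioi.eventually_mem (mem_Ioi.mpr hρ)] with x hx
    have hx0 : x ≠ 0 := ne_of_gt (mem_Ioi.mp hx)
    rw [L1 μ A t hμ hA ht hx0]
    have h1 : (0:ℝ) < 1 + A * Real.exp (x^2/(4*μ*t)) := by positivity
    field_simp
  rw [heq.deriv_eq]
  have hE := hasDerivAt_exp_sq μ t ρ
  have hnum : HasDerivAt (fun ρ' => -(A * Real.exp (ρ'^2/(4*μ*t))))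
      (-(A * (Real.exp (ρ^2/(4*μ*t)) * (2*ρ/(4*μ*t))))) ρ := (hE.const_mul A).neg
  have hden : HasDerivAt (fun ρ' => 2*μ*t^2*(1 + A * Real.exp (ρ'^2/(4*μ*t)))^2)
      (2*μ*t^2*(((2:ℕ):ℝ) * (1 + A * Real.exp (ρ^2/(4*μ*t)))^(2-1)
        * (A * (Real.exp (ρ^2/(4*μ*t)) * (2*ρ/(4*μ*t)))))) ρ :=
    (((hE.const_mul A).const_add 1).pow 2).const_mul (2*μ*t^2)
  have hden_ne : 2*μ*t^2*(1 + A * Real.exp (ρ^2/(4*μ*t)))^2 ≠ 0 := by positivity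
  rw [(show HasDerivAt (fun ρ' => -(A * Real.exp (ρ'^2/(4*μ*t))) / (2*μ*t^2*(1 + A * Real.exp (ρ'^2/(4*μ*t)))^2)) _ ρ from hnum.div hden hden_ne).deriv]
  have h1 : (0:ℝ) < 1 + A * Real.exp (ρ^2/(4*μ*t)) := by positivity
  have h2 : Real.exp (ρ^2/(4*μ*t)) ≠ 0 := (Real.exp_pos _).ne'
  push_cast
  field_simp
  ring

theorem stmt_9 (n : ℕ) (hn : 2 ≤ n) (μ a : ℝ) (hμ : 0 < μ) (ha : 0 < a)
    (ubar : ℝ → ℝ → ℝ)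
    (hubar : ∀ t r, ubar t r
      = r / (t * (1 + a * (4*π*μ*t) ^ ((n:ℝ)/2) * Real.exp (r^2/(4*μ*t)))))
    (tb : ℝ) (htb : 0 < tb) :
    Tendsto (fun q : ℝ × ℝ => ubar q.1 q.2 / q.2) (𝓝 tb ×ˢ 𝓝[>] 0)
        (𝓝 (1 / (tb * (1 + a * (4*π*μ*tb) ^ ((n:ℝ)/2)))))
    ∧ Tendsto (fun q : ℝ × ℝ => deriv (fun ρ => ubar q.1 ρ / ρ) q.2)
        (𝓝 tb ×ˢ 𝓝[>] 0) (𝓝 0)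
    ∧ Tendsto (fun q : ℝ × ℝ =>
          (1/q.2) * deriv (fun ρ => (1/ρ) * deriv (fun ρ' => ubar q.1 ρ' / ρ') ρ) q.2)
        (𝓝 tb ×ˢ 𝓝[>] 0)
        (𝓝 ((a * (4*π*μ*tb) ^ ((n:ℝ)/2)) * (a * (4*π*μ*tb) ^ ((n:ℝ)/2) - 1)
          / (4 * μ^2 * tb^3 * (1 + a * (4*π*μ*tb) ^ ((n:ℝ)/2))^3))) := by
  have hπ := Real.pi_pos
  set l := 𝓝 tb ×ˢ 𝓝[>] (0:ℝ) with hldef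
  have hAb : (0:ℝ) < a * (4*π*μ*tb) ^ ((n:ℝ)/2) := by positivity
  have hl1 : Tendsto (fun q : ℝ × ℝ => q.1) l (𝓝 tb) := tendsto_fst
  have hl2 : Tendsto (fun q : ℝ × ℝ => q.2) l (𝓝 0) :=
    tendsto_snd.mono_right nhdsWithin_le_nhds
  have hev : ∀ᶠ q : ℝ × ℝ in l, 0 < q.1 ∧ 0 < q.2 := by
    have h1 : ∀ᶠ t in 𝓝 tb, 0 < t := eventually_gt_nhds htb
    have h2 : ∀ᶠ r in 𝓝[>] (0:ℝ), 0 < r := eventually_mem_nhdsWithin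
    exact h1.prod_mk h2
  have hA : Tendsto (fun q : ℝ × ℝ => a * (4*π*μ*q.1) ^ ((n:ℝ)/2)) l
      (𝓝 (a * (4*π*μ*tb) ^ ((n:ℝ)/2))) := by
    apply Tendsto.const_mul
    have hc : ContinuousAt (fun x : ℝ => x ^ ((n:ℝ)/2)) (4*π*μ*tb) :=
      Real.continuousAt_rpow_const _ _ (Or.inl (by positivity))
    exact hc.tendsto.comp (hl1.const_mul (4*π*μ))
  have hE : Tendsto (fun q : ℝ × ℝ => Real.exp (q.2^2/(4*μ*q.1))) l (𝓝 1) := by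
    have h0 : Tendsto (fun q : ℝ × ℝ => q.2^2/(4*μ*q.1)) l (𝓝 0) := by
      have := Tendsto.div (hl2.pow 2) (hl1.const_mul (4*μ)) (by positivity)
      simpa [Pi.div_def] using this
    have := Real.continuous_exp.continuousAt.tendsto.comp h0
    simpa [Function.comp_def] using this
  have hu : Tendsto (fun q : ℝ × ℝ => a * (4*π*μ*q.1) ^ ((n:ℝ)/2) * Real.exp (q.2^2/(4*μ*q.1)))
      l (𝓝 (a * (4*π*μ*tb) ^ ((n:ℝ)/2))) := by
    simpa using hA.mul hE
  refine ⟨?_, ?_, ?_⟩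
  · -- part (i)
    have hT : Tendsto (fun q : ℝ × ℝ =>
        (q.1 * (1 + a * (4*π*μ*q.1) ^ ((n:ℝ)/2) * Real.exp (q.2^2/(4*μ*q.1))))⁻¹) l
        (𝓝 ((tb * (1 + a * (4*π*μ*tb) ^ ((n:ℝ)/2)))⁻¹)) :=
      (hl1.mul (tendsto_const_nhds.add hu)).inv₀ (by positivity)
    rw [one_div]
    refine Tendsto.congr' ?_ hT
    filter_upwards [hev] with q hq
    obtain ⟨ht, hr⟩ := hq
    rw [hubar]
    have hr' : q.2 ≠ 0 := hr.ne'
    have hX : q.1 * (1 + a * (4*π*μ*q.1) ^ ((n:ℝ)/2) * Real.exp (q.2^2/(4*μ*q.1))) ≠ 0 := by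
      positivity
    field_simp
  · -- part (ii)
    have hden : Tendsto (fun q : ℝ × ℝ =>
        2*μ*q.1^2*(1 + a * (4*π*μ*q.1) ^ ((n:ℝ)/2) * Real.exp (q.2^2/(4*μ*q.1)))^2) l
        (𝓝 (2*μ*tb^2*(1 + a * (4*π*μ*tb) ^ ((n:ℝ)/2))^2)) := by
      have := ((hl1.pow 2).const_mul (2*μ)).mul (((tendsto_const_nhds : Filter.Tendsto (fun _ : ℝ × ℝ => (1:ℝ)) l (𝓝 1)).add hu).pow 2)
      simpa [mul_assoc] using this
    have hnum : Tendsto (fun q : ℝ × ℝ =>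
        -(a * (4*π*μ*q.1) ^ ((n:ℝ)/2) * Real.exp (q.2^2/(4*μ*q.1)) * q.2)) l (𝓝 0) := by
      have := (hu.mul hl2).neg
      simpa using this
    have hT := hnum.div hden (by positivity)
    rw [zero_div] at hT
    refine Tendsto.congr' ?_ hT
    filter_upwards [hev] with q hq
    obtain ⟨ht, hr⟩ := hq
    have hA' : 0 < a * (4*π*μ*q.1) ^ ((n:ℝ)/2) := by positivity
    simp only [Pi.div_apply, hubar]
    rw [L1 μ _ q.1 hμ hA' ht hr.ne']
  · -- part (iii)
    have hden : Tendsto (fun q : ℝ × ℝ =>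
        4*μ^2*q.1^3*(1 + a * (4*π*μ*q.1) ^ ((n:ℝ)/2) * Real.exp (q.2^2/(4*μ*q.1)))^3) l
        (𝓝 (4*μ^2*tb^3*(1 + a * (4*π*μ*tb) ^ ((n:ℝ)/2))^3)) := by
      have := ((hl1.pow 3).const_mul (4*μ^2)).mul (((tendsto_const_nhds : Filter.Tendsto (fun _ : ℝ × ℝ => (1:ℝ)) l (𝓝 1)).add hu).pow 3)
      simpa [mul_assoc] using this
    have hnum : Tendsto (fun q : ℝ × ℝ =>
        a * (4*π*μ*q.1) ^ ((n:ℝ)/2) * Real.exp (q.2^2/(4*μ*q.1))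
          * (a * (4*π*μ*q.1) ^ ((n:ℝ)/2) * Real.exp (q.2^2/(4*μ*q.1)) - 1)) l
        (𝓝 (a * (4*π*μ*tb) ^ ((n:ℝ)/2) * (a * (4*π*μ*tb) ^ ((n:ℝ)/2) - 1))) :=
      hu.mul (hu.sub tendsto_const_nhds)
    have hT := hnum.div hden (by positivity)
    refine Tendsto.congr' ?_ hT
    filter_upwards [hev] with q hq
    obtain ⟨ht, hr⟩ := hq
    have hA' : 0 < a * (4*π*μ*q.1) ^ ((n:ℝ)/2) := by positivity
    simp only [Pi.div_apply, hubar]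
    rw [L2 μ _ q.1 hμ hA' ht hr]
    have h1 : (0:ℝ) < 1 + a * (4*π*μ*q.1) ^ ((n:ℝ)/2) * Real.exp (q.2^2/(4*μ*q.1)) := by
      positivity
    field_simp
end

section
/- Let n ≥ 2, μ > 0, a > 0, 1 ≤ p < n, and define u_ss(t,r) = (4μ)^{n/2} t^{n/2−1} r^{1−n} exp(−r²/(4μt)) / (a + ∫_{r²/(4μt)}^∞ s^{−n/2} e^{−s} ds). Then ∫₀^∞ |u_ss(t,r)|^p r^{n-1} dr → 0 as t → 0+. -/
open Real Filter Topology MeasureTheory Set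

lemma aux_int (n : ℕ) {z : ℝ} (hz : 0 < z) :
    IntegrableOn (fun s : ℝ => s ^ (-(n:ℝ)/2) * Real.exp (-s)) (Ioi z) := by
  have hexp : IntegrableOn (fun s : ℝ => Real.exp (-s)) (Ioi z) := by
    simpa using exp_neg_integrableOn_Ioi z one_pos
  refine Integrable.mono' (hexp.const_mul (z ^ (-(n:ℝ)/2))) ?_ ?_
  · refine (ContinuousOn.mul ?_ (Real.continuous_exp.comp continuous_neg).continuousOn).aestronglyMeasurable measurableSet_Ioi
    exact fun x hx => (Real.continuousAt_rpow_const x _ (Or.inl (hz.trans hx).ne')).continuousWithinAt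
  · filter_upwards [ae_restrict_mem measurableSet_Ioi] with s hs
    have hs0 : 0 < s := hz.trans hs
    rw [Real.norm_eq_abs, abs_mul, abs_of_nonneg (rpow_nonneg hs0.le _),
      abs_of_nonneg (exp_pos _).le]
    exact mul_le_mul_of_nonneg_right
      (rpow_le_rpow_of_nonpos hz (le_of_lt hs) (by
        have : (0:ℝ) ≤ (n:ℝ) := Nat.cast_nonneg n
        linarith)) (exp_pos _).le

lemma aux_nonneg (n : ℕ) {z : ℝ} (hz : 0 < z) :
    0 ≤ ∫ s in Ioi z, s ^ (-(n:ℝ)/2) * Real.exp (-s) := by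
  refine setIntegral_nonneg measurableSet_Ioi fun s hs => ?_
  have hs0 : 0 < s := hz.trans hs
  positivity

lemma aux_lb (n : ℕ) {z : ℝ} (hz : 0 < z) :
    (2:ℝ) ^ (-(n:ℝ)/2) * z ^ (1-(n:ℝ)/2) * Real.exp (-(2*z))
      ≤ ∫ s in Ioi z, s ^ (-(n:ℝ)/2) * Real.exp (-s) := by
  have h2z : z < 2*z := by linarith
  have hne : -(n:ℝ)/2 ≤ 0 := by
    have : (0:ℝ) ≤ (n:ℝ) := Nat.cast_nonneg n
    linarith
  have hml : (∫ s in Ioc z (2*z), s ^ (-(n:ℝ)/2) * Real.exp (-s))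
      ≤ ∫ s in Ioi z, s ^ (-(n:ℝ)/2) * Real.exp (-s) := by
    refine setIntegral_mono_set (aux_int n hz) ?_ (HasSubset.Subset.eventuallyLE Ioc_subset_Ioi_self)
    filter_upwards [ae_restrict_mem measurableSet_Ioi] with s hs
    have hs0 : 0 < s := hz.trans hs
    positivity
  refine le_trans ?_ hml
  have hci : (∫ _ in Ioc z (2*z), ((2*z) ^ (-(n:ℝ)/2) * Real.exp (-(2*z))))
      ≤ ∫ s in Ioc z (2*z), s ^ (-(n:ℝ)/2) * Real.exp (-s) := by
    refine setIntegral_mono_on (integrableOn_const measure_Ioc_lt_top.ne)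
      ((aux_int n hz).mono_set Ioc_subset_Ioi_self) measurableSet_Ioc fun s hs => ?_
    have hs0 : 0 < s := hz.trans hs.1
    exact mul_le_mul (rpow_le_rpow_of_nonpos hs0 hs.2 hne)
      (exp_le_exp.2 (by linarith [hs.2])) (exp_pos _).le (rpow_nonneg hs0.le _)
  refine le_trans (le_of_eq ?_) hci
  rw [setIntegral_const, Real.volume_real_Ioc, smul_eq_mul,
    max_eq_left (by linarith), mul_rpow (by norm_num) hz.le]
  have hzz : z * z ^ (-(n:ℝ)/2) = z ^ (1-(n:ℝ)/2) := by
    rw [show (1-(n:ℝ)/2) = 1 + -(n:ℝ)/2 by ring, rpow_add hz, rpow_one]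
  rw [← hzz]; ring

theorem stmt_13 (n : ℕ) (hn : 2 ≤ n) (μ a p : ℝ) (hμ : 0 < μ) (ha : 0 < a)
    (hp1 : 1 ≤ p) (hpn : p < n)
    (uss : ℝ → ℝ → ℝ)
    (huss : ∀ t r, uss t r
      = (4*μ) ^ ((n:ℝ)/2) * t ^ ((n:ℝ)/2 - 1) * r ^ (1 - (n:ℝ))
          * Real.exp (-(r^2)/(4*μ*t))
          / (a + ∫ s in Ioi (r^2/(4*μ*t)), s ^ (-(n:ℝ)/2) * Real.exp (-s))) :
    Tendsto (fun t : ℝ => ∫ r in Ioi (0:ℝ), |uss t r| ^ p * r ^ ((n:ℝ)-1))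
      (𝓝[>] 0) (𝓝 0) := by
  have hn2 : (2:ℝ) ≤ (n:ℝ) := by exact_mod_cast hn
  have hp0 : (0:ℝ) < p := lt_of_lt_of_le one_pos hp1
  have hq : (0:ℝ) < ((n:ℝ)-p)/2 := by linarith
  have h4μ : (0:ℝ) < 4*μ := by linarith
  set K : ℝ := 4*μ*((2:ℝ) ^ ((n:ℝ)/2) * Real.exp 2) with hK
  have hKpos : 0 < K := by rw [hK]; positivity
  set C1 : ℝ := K ^ p with hC1
  have hC1pos : 0 < C1 := by rw [hC1]; positivity
  set C2 : ℝ := (4*μ)^(p/2) / a^p with hC2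
  have hC2pos : 0 < C2 := by rw [hC2]; positivity
  set Cg : ℝ := (1/2) * Real.Gamma ((n:ℝ)/2) with hCg
  set G : ℝ → ℝ := fun t => C1 * ((4*μ*t) ^ (((n:ℝ)-p)/2) / ((n:ℝ)-p))
      + C2 * t ^ (-(p/2)) * ((p/(4*μ*t)) ^ (-(n:ℝ)/2) * Cg) with hG
  refine squeeze_zero' (g := G) ?_ ?_ ?_
  · filter_upwards [self_mem_nhdsWithin] with t _
    exact setIntegral_nonneg measurableSet_Ioi fun r hr =>
      mul_nonneg (rpow_nonneg (abs_nonneg _) _) (rpow_nonneg (le_of_lt hr) _)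
  · filter_upwards [self_mem_nhdsWithin] with t ht
    have ht0 : (0:ℝ) < t := ht
    have h4t : (0:ℝ) < 4*μ*t := by positivity
    set R : ℝ := Real.sqrt (4*μ*t) with hRdef
    have hR : 0 < R := Real.sqrt_pos.2 h4t
    have hR2 : R^2 = 4*μ*t := Real.sq_sqrt h4t.le
    set b : ℝ := p/(4*μ*t) with hbdef
    have hb : 0 < b := by rw [hbdef]; positivity
    set g : ℝ → ℝ := fun r => C1 * (Ioc (0:ℝ) R).indicator (fun r => r ^ ((n:ℝ)-1-p)) r
        + (C2 * t ^ (-(p/2))) * (r ^ ((n:ℝ)-1) * Real.exp (-b * r^2)) with hg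
    have hint2 : IntegrableOn (fun r:ℝ => r ^ ((n:ℝ)-1) * Real.exp (-b*r^2)) (Ioi 0) :=
      integrableOn_rpow_mul_exp_neg_mul_sq hb (by linarith)
    have hint1 : IntegrableOn
        (fun r:ℝ => (Ioc (0:ℝ) R).indicator (fun r => r ^ ((n:ℝ)-1-p)) r) (Ioi 0) := by
      have h1 : IntegrableOn (fun r:ℝ => r ^ ((n:ℝ)-1-p)) (Ioc 0 R) := by
        have h2 := intervalIntegral.intervalIntegrable_rpow' (a:=0) (b:=R)
          (show (-1:ℝ) < (n:ℝ)-1-p by linarith)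
        rwa [intervalIntegrable_iff_integrableOn_Ioc_of_le hR.le] at h2
      exact (h1.integrable_indicator measurableSet_Ioc).integrableOn
    have hgint : IntegrableOn g (Ioi 0) := (hint1.const_mul _).add (hint2.const_mul _)
    have hpt : ∀ r ∈ Ioi (0:ℝ), |uss t r| ^ p * r ^ ((n:ℝ)-1) ≤ g r := by
      intro r hr
      have hr0 : (0:ℝ) < r := hr
      have hz : 0 < r^2/(4*μ*t) := by positivity
      rw [huss t r, neg_div]
      set z : ℝ := r^2/(4*μ*t) with hzdef
      set B : ℝ := (4*μ) ^ ((n:ℝ)/2) * t ^ ((n:ℝ)/2 - 1) * r ^ (1 - (n:ℝ)) with hB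
      have hBpos : 0 < B := by rw [hB]; positivity
      set I : ℝ := ∫ s in Ioi z, s ^ (-(n:ℝ)/2) * Real.exp (-s) with hI
      have hIpos : 0 ≤ I := aux_nonneg n hz
      have hDpos : 0 < a + I := by linarith
      rw [abs_of_nonneg (div_nonneg (mul_nonneg hBpos.le (exp_pos _).le) hDpos.le),
        div_rpow (mul_nonneg hBpos.le (exp_pos _).le) hDpos.le]
      have hexp_eq : Real.exp (-z) ^ p = Real.exp (-b * r^2) := by
        rw [← Real.exp_mul]
        congr 1
        rw [hzdef, hbdef]
        ring
      rcases le_or_gt r R with hrR | hrR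
      · -- small r : use lower bound on the denominator
        have hind : (Ioc (0:ℝ) R).indicator (fun r => r ^ ((n:ℝ)-1-p)) r
            = r ^ ((n:ℝ)-1-p) := Set.indicator_of_mem (show r ∈ Ioc (0:ℝ) R from ⟨hr0, hrR⟩) _
        have hz1 : z ≤ 1 := by
          rw [hzdef, div_le_one h4t]
          nlinarith [hR2]
        have hLpos : (0:ℝ) < (2:ℝ)^(-(n:ℝ)/2) * Real.exp (-2) := by positivity
        have hDlb : ((2:ℝ)^(-(n:ℝ)/2) * Real.exp (-2)) * z ^ (1-(n:ℝ)/2) ≤ a + I := by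
          have h1 := aux_lb n hz
          have e1 : Real.exp (-2) ≤ Real.exp (-(2*z)) := exp_le_exp.2 (by linarith)
          have hpos : (0:ℝ) ≤ (2:ℝ)^(-(n:ℝ)/2) * z ^ (1-(n:ℝ)/2) := by positivity
          have h3 : ((2:ℝ)^(-(n:ℝ)/2) * Real.exp (-2)) * z ^ (1-(n:ℝ)/2)
              ≤ (2:ℝ)^(-(n:ℝ)/2) * z ^ (1-(n:ℝ)/2) * Real.exp (-(2*z)) := by
            calc ((2:ℝ)^(-(n:ℝ)/2) * Real.exp (-2)) * z ^ (1-(n:ℝ)/2)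
                = ((2:ℝ)^(-(n:ℝ)/2) * z ^ (1-(n:ℝ)/2)) * Real.exp (-2) := by ring
              _ ≤ ((2:ℝ)^(-(n:ℝ)/2) * z ^ (1-(n:ℝ)/2)) * Real.exp (-(2*z)) :=
                  mul_le_mul_of_nonneg_left e1 hpos
              _ = _ := by ring
          rw [hI]
          linarith
        have hDp : (((2:ℝ)^(-(n:ℝ)/2) * Real.exp (-2)) * z ^ (1-(n:ℝ)/2)) ^ p
            ≤ (a + I) ^ p := rpow_le_rpow (by positivity) hDlb hp0.le
        have hAp : (B * Real.exp (-z)) ^ p ≤ B ^ p := by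
          rw [mul_rpow hBpos.le (exp_pos _).le]
          have h5 : Real.exp (-z) ^ p ≤ 1 :=
            rpow_le_one (exp_pos _).le
              (by rw [← Real.exp_zero]; exact exp_le_exp.2 (by linarith)) hp0.le
          calc B ^ p * Real.exp (-z) ^ p ≤ B ^ p * 1 :=
                mul_le_mul_of_nonneg_left h5 (rpow_nonneg hBpos.le _)
            _ = B ^ p := mul_one _
        have hz_expand : z ^ (1-(n:ℝ)/2) = r ^ (2-(n:ℝ)) * (4*μ*t) ^ ((n:ℝ)/2-1) := by
          rw [hzdef, div_rpow (by positivity) h4t.le, ← Real.rpow_natCast r 2,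
            ← Real.rpow_mul hr0.le, show ((2:ℕ):ℝ)*(1-(n:ℝ)/2) = 2-(n:ℝ) by push_cast; ring,
            div_eq_mul_inv, ← Real.rpow_neg h4t.le,
            show -(1-(n:ℝ)/2) = (n:ℝ)/2-1 by ring]
        have hBL : B = (K * r⁻¹) * (((2:ℝ)^(-(n:ℝ)/2) * Real.exp (-2)) * z ^ (1-(n:ℝ)/2)) := by
          have h2e : (2:ℝ)^((n:ℝ)/2) * (2:ℝ)^(-(n:ℝ)/2) = 1 := by
            rw [← rpow_add (by norm_num : (0:ℝ) < 2),
              show (n:ℝ)/2 + -(n:ℝ)/2 = 0 by ring, rpow_zero]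
          have hee : Real.exp 2 * Real.exp (-2) = 1 := by
            rw [← Real.exp_add]; norm_num
          have h4' : (4*μ) * (4*μ)^((n:ℝ)/2-1) = (4*μ)^((n:ℝ)/2) := by
            nth_rewrite 1 [← Real.rpow_one (4*μ)]
            rw [← rpow_add h4μ]
            norm_num
          have hr1 : r⁻¹ * r^(2-(n:ℝ)) = r^(1-(n:ℝ)) := by
            rw [← Real.rpow_neg_one r, ← rpow_add hr0,
              show (-1:ℝ) + (2-(n:ℝ)) = 1-(n:ℝ) by ring]
          have hmt : (4*μ*t) ^ ((n:ℝ)/2-1) = (4*μ)^((n:ℝ)/2-1) * t^((n:ℝ)/2-1) :=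
            mul_rpow h4μ.le ht0.le
          rw [hz_expand, hmt, hK, hB]
          calc (4*μ) ^ ((n:ℝ)/2) * t ^ ((n:ℝ)/2 - 1) * r ^ (1 - (n:ℝ))
              = (4*μ) ^ ((n:ℝ)/2) * t ^ ((n:ℝ)/2 - 1) * (r⁻¹ * r^(2-(n:ℝ))) := by rw [hr1]
            _ = ((2:ℝ)^((n:ℝ)/2) * (2:ℝ)^(-(n:ℝ)/2)) * (Real.exp 2 * Real.exp (-2)) *
                  ((4*μ) ^ ((n:ℝ)/2) * t ^ ((n:ℝ)/2 - 1) * (r⁻¹ * r^(2-(n:ℝ)))) := by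
                rw [h2e, hee]; ring
            _ = ((2:ℝ)^((n:ℝ)/2) * (2:ℝ)^(-(n:ℝ)/2)) * (Real.exp 2 * Real.exp (-2)) *
                  (((4*μ) * (4*μ)^((n:ℝ)/2-1)) * t ^ ((n:ℝ)/2 - 1) * (r⁻¹ * r^(2-(n:ℝ)))) := by
                rw [h4']
            _ = _ := by ring
        have hE4 : (K * r⁻¹) ^ p * r ^ ((n:ℝ)-1) = C1 * r ^ ((n:ℝ)-1-p) := by
          rw [mul_rpow hKpos.le (inv_nonneg.2 hr0.le), ← Real.rpow_neg_one r,
            ← Real.rpow_mul hr0.le, mul_assoc, ← rpow_add hr0,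
            show (-1)*p + ((n:ℝ)-1) = (n:ℝ)-1-p by ring, hC1]
        calc (B * Real.exp (-z)) ^ p / (a + I) ^ p * r ^ ((n:ℝ)-1)
            ≤ B ^ p / (((2:ℝ)^(-(n:ℝ)/2) * Real.exp (-2)) * z ^ (1-(n:ℝ)/2)) ^ p
                * r ^ ((n:ℝ)-1) := by
              refine mul_le_mul_of_nonneg_right
                (div_le_div₀ (rpow_nonneg hBpos.le _) hAp (by positivity) hDp)
                (rpow_nonneg hr0.le _)
          _ = (K * r⁻¹) ^ p * r ^ ((n:ℝ)-1) := by
              rw [← div_rpow hBpos.le (by positivity), hBL,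
                mul_div_cancel_right₀ _ (by positivity :
                  ((2:ℝ)^(-(n:ℝ)/2) * Real.exp (-2)) * z ^ (1-(n:ℝ)/2) ≠ 0)]
          _ = C1 * r ^ ((n:ℝ)-1-p) := hE4
          _ ≤ g r := by
              simp only [hg, hind]
              have h6 : 0 ≤ (C2 * t ^ (-(p/2))) * (r ^ ((n:ℝ)-1) * Real.exp (-b * r^2)) :=
                mul_nonneg (mul_nonneg hC2pos.le (rpow_nonneg ht0.le _))
                  (mul_nonneg (rpow_nonneg hr0.le _) (exp_pos _).le)
              linarith
      · -- large r : use the constant lower bound a on the denominator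
        have hind : (Ioc (0:ℝ) R).indicator (fun r => r ^ ((n:ℝ)-1-p)) r = 0 :=
          indicator_of_notMem (fun h => absurd h.2 (not_le.2 hrR)) _
        have hRpow : R ^ (1-(n:ℝ)) = (4*μ)^((1-(n:ℝ))/2) * t^((1-(n:ℝ))/2) := by
          rw [hRdef, Real.sqrt_eq_rpow, ← Real.rpow_mul h4t.le,
            show 1/2*(1-(n:ℝ)) = (1-(n:ℝ))/2 by ring, mul_rpow h4μ.le ht0.le]
        have hBW : B ≤ (4*μ)^((1:ℝ)/2) * t ^ (-((1:ℝ)/2)) := by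
          rw [hB]
          calc (4*μ) ^ ((n:ℝ)/2) * t ^ ((n:ℝ)/2 - 1) * r ^ (1 - (n:ℝ))
              ≤ (4*μ) ^ ((n:ℝ)/2) * t ^ ((n:ℝ)/2 - 1) * R ^ (1 - (n:ℝ)) :=
                mul_le_mul_of_nonneg_left
                  (rpow_le_rpow_of_nonpos hR hrR.le (by linarith)) (by positivity)
            _ = (4*μ)^((1:ℝ)/2) * t ^ (-((1:ℝ)/2)) := by
                rw [hRpow]
                calc (4*μ) ^ ((n:ℝ)/2) * t ^ ((n:ℝ)/2 - 1) *
                      ((4*μ)^((1-(n:ℝ))/2) * t^((1-(n:ℝ))/2))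
                    = ((4*μ) ^ ((n:ℝ)/2) * (4*μ)^((1-(n:ℝ))/2)) *
                      (t ^ ((n:ℝ)/2 - 1) * t^((1-(n:ℝ))/2)) := by ring
                  _ = _ := by
                      rw [← rpow_add h4μ, ← rpow_add ht0,
                        show (n:ℝ)/2 + (1-(n:ℝ))/2 = (1:ℝ)/2 by ring,
                        show (n:ℝ)/2-1 + (1-(n:ℝ))/2 = -((1:ℝ)/2) by ring]
        have hE3 : ((4*μ)^((1:ℝ)/2) * t ^ (-((1:ℝ)/2))) ^ p
            = (4*μ)^(p/2) * t ^ (-(p/2)) := by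
          rw [mul_rpow (rpow_nonneg h4μ.le _) (rpow_nonneg ht0.le _),
            ← Real.rpow_mul h4μ.le, ← Real.rpow_mul ht0.le,
            show (1:ℝ)/2*p = p/2 by ring, show (-((1:ℝ)/2))*p = -(p/2) by ring]
        calc (B * Real.exp (-z)) ^ p / (a + I) ^ p * r ^ ((n:ℝ)-1)
            = B ^ p * Real.exp (-z) ^ p / (a + I) ^ p * r ^ ((n:ℝ)-1) := by
              rw [mul_rpow hBpos.le (exp_pos _).le]
          _ ≤ B ^ p * Real.exp (-z) ^ p / a ^ p * r ^ ((n:ℝ)-1) := by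
              refine mul_le_mul_of_nonneg_right
                (div_le_div₀ (mul_nonneg (rpow_nonneg hBpos.le _)
                    (rpow_nonneg (exp_pos _).le _)) le_rfl
                  (rpow_pos_of_pos ha p)
                  (rpow_le_rpow ha.le (by linarith) hp0.le))
                (rpow_nonneg hr0.le _)
          _ ≤ ((4*μ)^((1:ℝ)/2) * t ^ (-((1:ℝ)/2))) ^ p * Real.exp (-z) ^ p / a ^ p
                * r ^ ((n:ℝ)-1) := by
              refine mul_le_mul_of_nonneg_right
                (div_le_div₀ (by positivity)
                  (mul_le_mul_of_nonneg_right (rpow_le_rpow hBpos.le hBW hp0.le)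
                    (rpow_nonneg (exp_pos _).le _))
                  (rpow_pos_of_pos ha p) le_rfl)
                (rpow_nonneg hr0.le _)
          _ = g r := by
              simp only [hg, hind, mul_zero, zero_add]
              rw [hE3, hexp_eq, hC2]
              ring
    calc (∫ r in Ioi (0:ℝ), |uss t r| ^ p * r ^ ((n:ℝ)-1))
        ≤ ∫ r in Ioi (0:ℝ), g r := by
          refine integral_mono_of_nonneg
            ((ae_restrict_iff' measurableSet_Ioi).mpr (ae_of_all _ fun r hr =>
              mul_nonneg (rpow_nonneg (abs_nonneg _) _) (rpow_nonneg (le_of_lt hr) _)))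
            hgint ((ae_restrict_iff' measurableSet_Ioi).mpr (ae_of_all _ hpt))
      _ = C1 * (∫ r in Ioc (0:ℝ) R, r ^ ((n:ℝ)-1-p))
            + (C2 * t ^ (-(p/2))) * ∫ r in Ioi (0:ℝ), r ^ ((n:ℝ)-1) * Real.exp (-b*r^2) := by
          simp only [hg]
          rw [integral_add (hint1.const_mul _) (hint2.const_mul _),
            integral_const_mul, integral_const_mul,
            setIntegral_indicator measurableSet_Ioc,
            inter_eq_self_of_subset_right Ioc_subset_Ioi_self]
      _ = G t := by
          have hI1 : ∫ r in Ioc (0:ℝ) R, r ^ ((n:ℝ)-1-p)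
              = (4*μ*t) ^ (((n:ℝ)-p)/2) / ((n:ℝ)-p) := by
            have hne : ((n:ℝ)-1-p)+1 ≠ 0 := by
              have : (0:ℝ) < ((n:ℝ)-1-p)+1 := by linarith
              exact this.ne'
            rw [← intervalIntegral.integral_of_le hR.le,
              integral_rpow (Or.inl (by linarith : (-1:ℝ) < (n:ℝ)-1-p)),
              Real.zero_rpow hne, sub_zero,
              show ((n:ℝ)-1-p)+1 = (n:ℝ)-p by ring, hRdef, Real.sqrt_eq_rpow,
              ← Real.rpow_mul h4t.le, show 1/2*((n:ℝ)-p) = ((n:ℝ)-p)/2 by ring]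
          have hI2 : ∫ r in Ioi (0:ℝ), r ^ ((n:ℝ)-1) * Real.exp (-b*r^2)
              = b ^ (-(n:ℝ)/2) * Cg := by
            have h := integral_rpow_mul_exp_neg_mul_rpow
              (by norm_num : (0:ℝ) < 2) (show (-1:ℝ) < (n:ℝ)-1 by linarith) hb
            rw [show ((n:ℝ)-1)+1 = (n:ℝ) by ring] at h
            calc ∫ r in Ioi (0:ℝ), r ^ ((n:ℝ)-1) * Real.exp (-b*r^2)
                = ∫ x in Ioi (0:ℝ), x ^ ((n:ℝ)-1) * Real.exp (-b * x ^ (2:ℝ)) := by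
                  refine setIntegral_congr_fun measurableSet_Ioi fun x hx => ?_
                  rw [Real.rpow_two]
              _ = b ^ (-(n:ℝ)/2) * (1/2) * Real.Gamma ((n:ℝ)/2) := h
              _ = b ^ (-(n:ℝ)/2) * Cg := by rw [hCg]; ring
          rw [hI1, hI2]
  · -- the bounding function tends to 0
    have hbase : Tendsto (fun t:ℝ => t ^ (((n:ℝ)-p)/2)) (𝓝[>] 0) (𝓝 0) := by
      have c : ContinuousAt (fun x:ℝ => x ^ (((n:ℝ)-p)/2)) 0 :=
        Real.continuousAt_rpow_const 0 _ (Or.inr hq.le)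
      have h := c.tendsto
      rw [Real.zero_rpow hq.ne'] at h
      exact h.mono_left nhdsWithin_le_nhds
    have hGE : (fun t:ℝ => (C1 * ((4*μ)^(((n:ℝ)-p)/2) / ((n:ℝ)-p))
          + C2 * ((p/(4*μ))^(-(n:ℝ)/2) * Cg)) * t ^ (((n:ℝ)-p)/2)) =ᶠ[𝓝[>] (0:ℝ)] G := by
      filter_upwards [self_mem_nhdsWithin] with t ht
      have ht0 : (0:ℝ) < t := ht
      have h1 : (4*μ*t) ^ (((n:ℝ)-p)/2) = (4*μ)^(((n:ℝ)-p)/2) * t ^ (((n:ℝ)-p)/2) :=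
        mul_rpow h4μ.le ht0.le
      have e1 : (p/(4*μ*t)) ^ (-(n:ℝ)/2) = (p/(4*μ))^(-(n:ℝ)/2) * t ^ ((n:ℝ)/2) := by
        rw [show p/(4*μ*t) = (p/(4*μ)) * t⁻¹ by field_simp,
          mul_rpow (by positivity) (inv_nonneg.2 ht0.le), ← Real.rpow_neg_one t,
          ← Real.rpow_mul ht0.le, show (-1)*(-(n:ℝ)/2) = (n:ℝ)/2 by ring]
      have h2 : t ^ (-(p/2)) * (p/(4*μ*t)) ^ (-(n:ℝ)/2)
          = (p/(4*μ))^(-(n:ℝ)/2) * t ^ (((n:ℝ)-p)/2) := by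
        rw [e1]
        calc t ^ (-(p/2)) * ((p/(4*μ))^(-(n:ℝ)/2) * t ^ ((n:ℝ)/2))
            = (p/(4*μ))^(-(n:ℝ)/2) * (t ^ (-(p/2)) * t ^ ((n:ℝ)/2)) := by ring
          _ = _ := by rw [← rpow_add ht0, show -(p/2) + (n:ℝ)/2 = ((n:ℝ)-p)/2 by ring]
      simp only [hG]
      calc (C1 * ((4*μ)^(((n:ℝ)-p)/2) / ((n:ℝ)-p)) + C2 * ((p/(4*μ))^(-(n:ℝ)/2) * Cg))
            * t ^ (((n:ℝ)-p)/2)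
          = C1 * ((4*μ)^(((n:ℝ)-p)/2) * t ^ (((n:ℝ)-p)/2) / ((n:ℝ)-p))
            + C2 * (t ^ (-(p/2)) * (p/(4*μ*t)) ^ (-(n:ℝ)/2)) * Cg := by rw [h2]; ring
        _ = _ := by rw [← h1]; ring
    refine Tendsto.congr' hGE ?_
    have h := hbase.const_mul (C1 * ((4*μ)^(((n:ℝ)-p)/2) / ((n:ℝ)-p))
        + C2 * ((p/(4*μ))^(-(n:ℝ)/2) * Cg))
    simpa using h
end

section
/- Let μ > 0 and define u_nst(t,r) = 2μ·(1/r − exp(−r²/(4μt))/(√(μπt)·erf(r/√(4μt)))) for t, r > 0, where erf(z) = (2/√π)∫₀^z e^{−s²}ds. Then u_nst solves the 3-dimensional radial Cole equation u_t + u u_r = μ(u_rr + 2u_r/r − 2u/r²) on (0,∞)×(0,∞). -/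
open Real Filter Topology MeasureTheory Set

/-- The error function. -/
noncomputable def erf (z : ℝ) : ℝ :=
  2 / Real.sqrt π * ∫ s in (0:ℝ)..z, Real.exp (-(s^2))

lemma erf_hasDerivAt (z : ℝ) : HasDerivAt erf (2/Real.sqrt π * Real.exp (-(z^2))) z := by
  have h : HasDerivAt (fun u => ∫ s in (0:ℝ)..u, Real.exp (-(s^2)))
      (Real.exp (-(z^2))) z :=
    (Continuous.integral_hasStrictDerivAt (by continuity) 0 z).hasDerivAt
  have := h.const_mul (2/Real.sqrt π)
  exact this

lemma erf_pos {z : ℝ} (hz : 0 < z) : 0 < erf z := by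
  unfold erf
  apply mul_pos (div_pos two_pos (Real.sqrt_pos.2 pi_pos))
  apply intervalIntegral.intervalIntegral_pos_of_pos_on
  · exact (Continuous.intervalIntegrable (by continuity) 0 z)
  · intro x hx; positivity
  · exact hz

noncomputable def Hf (μ t r : ℝ) : ℝ :=
  Real.exp (-(r^2)/(4*μ*t)) / (Real.sqrt (μ*π*t) * erf (r / Real.sqrt (4*μ*t)))

lemma H_hasDerivAt_r {μ t r : ℝ} (hμ : 0 < μ) (ht : 0 < t) (hr : 0 < r) :
    HasDerivAt (fun ρ => Hf μ t ρ)
      (-(r/(2*μ*t)) * Hf μ t r - (Hf μ t r)^2) r := by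
  have hA0 : 0 < Real.sqrt (4*μ*t) := Real.sqrt_pos.2 (by positivity)
  have hS0 : 0 < Real.sqrt (μ*π*t) := Real.sqrt_pos.2 (by positivity)
  have hF0 : 0 < erf (r / Real.sqrt (4*μ*t)) := erf_pos (by positivity)
  have hp0 : 0 < Real.sqrt π := Real.sqrt_pos.2 pi_pos
  have hN : HasDerivAt (fun ρ : ℝ => Real.exp (-(ρ^2)/(4*μ*t)))
      (Real.exp (-(r^2)/(4*μ*t)) * ((-(2*r))/(4*μ*t))) r := by
    have h1 : HasDerivAt (fun ρ : ℝ => -(ρ^2)/(4*μ*t)) ((-(2*r))/(4*μ*t)) r := by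
      have := ((hasDerivAt_pow 2 r).neg).div_const (4*μ*t)
      simpa using this
    exact h1.exp
  have hFd : HasDerivAt (fun ρ : ℝ => erf (ρ / Real.sqrt (4*μ*t)))
      ((2/Real.sqrt π * Real.exp (-((r/Real.sqrt (4*μ*t))^2))) * (1/Real.sqrt (4*μ*t))) r := by
    have hin : HasDerivAt (fun ρ : ℝ => ρ / Real.sqrt (4*μ*t)) (1/Real.sqrt (4*μ*t)) r := by
      simpa using (hasDerivAt_id r).div_const (Real.sqrt (4*μ*t))
    exact (erf_hasDerivAt _).comp r hin
  have hD : HasDerivAt (fun ρ : ℝ => Real.sqrt (μ*π*t) * erf (ρ / Real.sqrt (4*μ*t)))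
      (Real.sqrt (μ*π*t) * ((2/Real.sqrt π * Real.exp (-((r/Real.sqrt (4*μ*t))^2))) * (1/Real.sqrt (4*μ*t)))) r :=
    hFd.const_mul _
  have hne : Real.sqrt (μ*π*t) * erf (r / Real.sqrt (4*μ*t)) ≠ 0 := by positivity
  have hH : HasDerivAt (fun ρ => Hf μ t ρ) _ r := hN.div hD hne
  convert hH using 1
  have hexp : Real.exp (-((r/Real.sqrt (4*μ*t))^2)) = Real.exp (-(r^2)/(4*μ*t)) := by
    rw [div_pow, Real.sq_sqrt (by positivity : (0:ℝ) ≤ 4*μ*t), neg_div]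
  rw [hexp]
  have hq0 : 0 < Real.sqrt (μ*t) := Real.sqrt_pos.2 (by positivity)
  have hA : Real.sqrt (4*μ*t) = 2 * Real.sqrt (μ*t) := by
    rw [show 4*μ*t = 2^2*(μ*t) by ring, Real.sqrt_mul (by positivity), Real.sqrt_sq (by norm_num)]
  have hS : Real.sqrt (μ*π*t) = Real.sqrt π * Real.sqrt (μ*t) := by
    rw [show μ*π*t = π*(μ*t) by ring, Real.sqrt_mul pi_pos.le]
  rw [Hf, hA, hS]
  set q := Real.sqrt (μ*t) with hqdef
  set p := Real.sqrt π with hpdef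
  set e := Real.exp (-(r^2)/(4*μ*t)) with hedef
  set f := erf (r / (2*q)) with hfdef
  have hμq : μ = q^2/t := by rw [hqdef, Real.sq_sqrt (by positivity)]; field_simp
  have hf0' : 0 < f := by rw [hfdef, ← hA]; exact hF0
  rw [hμq]
  field_simp
  ring

lemma H_hasDerivAt_t {μ t r : ℝ} (hμ : 0 < μ) (ht : 0 < t) (hr : 0 < r) :
    HasDerivAt (fun s => Hf μ s r)
      (r^2/(4*μ*t^2) * Hf μ t r - 1/(2*t) * Hf μ t r + r/(2*t) * (Hf μ t r)^2) t := by
  have h4 : (0:ℝ) < 4*μ*t := by positivity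
  have hA0 : 0 < Real.sqrt (4*μ*t) := Real.sqrt_pos.2 h4
  have hS0 : 0 < Real.sqrt (μ*π*t) := Real.sqrt_pos.2 (by positivity)
  have hF0 : 0 < erf (r / Real.sqrt (4*μ*t)) := erf_pos (by positivity)
  have hp0 : 0 < Real.sqrt π := Real.sqrt_pos.2 pi_pos
  have h0 : HasDerivAt (fun s : ℝ => 4*μ*s) (4*μ) t := by
    simpa using (hasDerivAt_id t).const_mul (4*μ)
  have hN : HasDerivAt (fun s : ℝ => Real.exp (-(r^2)/(4*μ*s)))
      (Real.exp (-(r^2)/(4*μ*t)) * (-(r^2) * (-(4*μ)/(4*μ*t)^2))) t := by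
    have hinv : HasDerivAt (fun s : ℝ => (4*μ*s)⁻¹) (-(4*μ)/(4*μ*t)^2) t := h0.inv (ne_of_gt h4)
    have := (hinv.const_mul (-(r^2))).exp
    simpa [div_eq_mul_inv] using this
  have hSd : HasDerivAt (fun s : ℝ => Real.sqrt (μ*π*s)) (1/(2*Real.sqrt (μ*π*t)) * (μ*π)) t := by
    have hin : HasDerivAt (fun s : ℝ => μ*π*s) (μ*π) t := by
      simpa using (hasDerivAt_id t).const_mul (μ*π)
    exact (Real.hasDerivAt_sqrt (by positivity)).comp t hin
  have hAd : HasDerivAt (fun s : ℝ => Real.sqrt (4*μ*s)) (1/(2*Real.sqrt (4*μ*t)) * (4*μ)) t :=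
    (Real.hasDerivAt_sqrt (ne_of_gt h4)).comp t h0
  have hin : HasDerivAt (fun s : ℝ => r / Real.sqrt (4*μ*s))
      (r * (-(1/(2*Real.sqrt (4*μ*t)) * (4*μ))/(Real.sqrt (4*μ*t))^2)) t := by
    have := (hAd.inv (ne_of_gt hA0)).const_mul r
    simpa [div_eq_mul_inv] using this
  have hFd := (erf_hasDerivAt (r / Real.sqrt (4*μ*t))).comp t hin
  have hD := hSd.mul hFd
  have hne : Real.sqrt (μ*π*t) * erf (r / Real.sqrt (4*μ*t)) ≠ 0 := by positivity
  have hH : HasDerivAt (fun s => Hf μ s r) _ t := hN.div hD hne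
  convert hH using 1
  have hexp : Real.exp (-((r/Real.sqrt (4*μ*t))^2)) = Real.exp (-(r^2)/(4*μ*t)) := by
    rw [div_pow, Real.sq_sqrt h4.le, neg_div]
  simp only [Function.comp_apply]
  rw [hexp]
  have hq0 : 0 < Real.sqrt (μ*t) := Real.sqrt_pos.2 (by positivity)
  have hA : Real.sqrt (4*μ*t) = 2 * Real.sqrt (μ*t) := by
    rw [show 4*μ*t = 2^2*(μ*t) by ring, Real.sqrt_mul (by positivity), Real.sqrt_sq (by norm_num)]
  have hS : Real.sqrt (μ*π*t) = Real.sqrt π * Real.sqrt (μ*t) := by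
    rw [show μ*π*t = π*(μ*t) by ring, Real.sqrt_mul pi_pos.le]
  rw [Hf, hA, hS]
  set q := Real.sqrt (μ*t) with hqdef
  set p := Real.sqrt π with hpdef
  set e := Real.exp (-(r^2)/(4*μ*t)) with hedef
  set f := erf (r / (2*q)) with hfdef
  have hμq : μ = q^2/t := by rw [hqdef, Real.sq_sqrt (by positivity)]; field_simp
  have hπp : π = p^2 := by rw [hpdef, Real.sq_sqrt pi_pos.le]
  have hf0' : 0 < f := by rw [hfdef, ← hA]; exact hF0
  rw [hμq, hπp]
  field_simp
  ring

theorem stmt_16 (μ : ℝ) (hμ : 0 < μ) (unst : ℝ → ℝ → ℝ)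
    (hunst : ∀ t r, unst t r
      = 2*μ * (1/r - Real.exp (-(r^2)/(4*μ*t))
          / (Real.sqrt (μ*π*t) * erf (r / Real.sqrt (4*μ*t))))) :
    ∀ t > (0:ℝ), ∀ r > (0:ℝ),
      deriv (fun s => unst s r) t + unst t r * deriv (fun ρ => unst t ρ) r
        = μ * (deriv (fun ρ => deriv (fun ρ' => unst t ρ') ρ) r
            + 2 * deriv (fun ρ => unst t ρ) r / r
            - 2 * unst t r / r^2) := by
  intro t ht r hr
  have hfun_r : (fun ρ => unst t ρ) = fun ρ => 2*μ*(1/ρ - Hf μ t ρ) :=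
    funext fun ρ => hunst t ρ
  have hfun_t : (fun s => unst s r) = fun s => 2*μ*(1/r - Hf μ s r) :=
    funext fun s => hunst s r
  -- first space derivative, in nice closed form
  set D1 : ℝ → ℝ := fun ρ => -2*μ/ρ^2 + ρ/t * Hf μ t ρ + 2*μ*(Hf μ t ρ)^2 with hD1def
  have hD1 : ∀ ρ : ℝ, 0 < ρ → HasDerivAt (fun ρ' => unst t ρ') (D1 ρ) ρ := by
    intro ρ hρ
    rw [hfun_r]
    have h1 : HasDerivAt (fun x : ℝ => 1/x) (-(ρ^2)⁻¹) ρ := by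
      simpa [one_div] using hasDerivAt_inv (ne_of_gt hρ)
    have h2 : HasDerivAt (fun ρ => 2*μ*(1/ρ - Hf μ t ρ)) _ ρ := (h1.sub (H_hasDerivAt_r hμ ht hρ)).const_mul (2*μ)
    convert h2 using 1
    rw [hD1def]
    field_simp
    ring
  have h_r : deriv (fun ρ => unst t ρ) r = D1 r := (hD1 r hr).deriv
  have hev : (fun ρ => deriv (fun ρ' => unst t ρ') ρ) =ᶠ[𝓝 r] D1 := by
    filter_upwards [eventually_gt_nhds hr] with ρ hρ
    exact (hD1 ρ hρ).deriv
  -- second space derivative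
  have hHr := H_hasDerivAt_r hμ ht hr
  have e1 : HasDerivAt (fun ρ : ℝ => -2*μ/ρ^2)
      ((0 * r^2 - (-2*μ) * (↑2 * r^(2-1)))/(r^2)^2) r :=
    (hasDerivAt_const r (-2*μ)).div (hasDerivAt_pow 2 r) (pow_ne_zero 2 (ne_of_gt hr))
  have e2 : HasDerivAt (fun ρ : ℝ => ρ/t * Hf μ t ρ)
      (1/t * Hf μ t r + r/t * (-(r/(2*μ*t)) * Hf μ t r - (Hf μ t r)^2)) r :=
    ((hasDerivAt_id r).div_const t).mul hHr
  have e3 : HasDerivAt (fun ρ : ℝ => 2*μ*(Hf μ t ρ)^2)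
      (2*μ*(↑2 * (Hf μ t r)^(2-1) * (-(r/(2*μ*t)) * Hf μ t r - (Hf μ t r)^2))) r :=
    (hHr.pow 2).const_mul (2*μ)
  have htot := (e1.add e2).add e3
  have h_rr : deriv (fun ρ => deriv (fun ρ' => unst t ρ') ρ) r
      = (0 * r^2 - (-2*μ) * (↑2 * r^(2-1)))/(r^2)^2
        + (1/t * Hf μ t r + r/t * (-(r/(2*μ*t)) * Hf μ t r - (Hf μ t r)^2))
        + 2*μ*(↑2 * (Hf μ t r)^(2-1) * (-(r/(2*μ*t)) * Hf μ t r - (Hf μ t r)^2)) := by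
    rw [hev.deriv_eq, hD1def]
    exact htot.deriv
  -- time derivative
  have h_t : deriv (fun s => unst s r) t
      = 2*μ*(0 - (r^2/(4*μ*t^2) * Hf μ t r - 1/(2*t) * Hf μ t r + r/(2*t) * (Hf μ t r)^2)) := by
    rw [hfun_t]
    exact (((hasDerivAt_const t (1/r)).sub (H_hasDerivAt_t hμ ht hr)).const_mul (2*μ)).deriv
  have hu : unst t r = 2*μ*(1/r - Hf μ t r) := hunst t r
  rw [h_t, h_r, h_rr, hu, hD1def]
  set h := Hf μ t r
  have hr0 : r ≠ 0 := ne_of_gt hr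
  have ht0 : t ≠ 0 := ne_of_gt ht
  have hμ0 : μ ≠ 0 := ne_of_gt hμ
  field_simp
  ring
end

section
/- Let μ > 0 and define u_nst(t,r) = 2μ·(1/r − exp(−r²/(4μt))/(√(μπt)·erf(r/√(4μt)))). Then for each fixed t̄ > 0, u_nst(t,r) → 0 as (t,r) → (t̄, 0+); and for each fixed r̄ > 0, u_nst(t,r̄) → 2μ/r̄ as t → 0+. -/
open Real Filter Topology MeasureTheory Set

lemma gauss_lb {z : ℝ} (hz : 0 < z) :
    z * Real.exp (-(z^2)) ≤ ∫ s in (0:ℝ)..z, Real.exp (-(s^2)) := by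
  have h := intervalIntegral.integral_mono_on (μ := volume) hz.le
    (intervalIntegrable_const (c := Real.exp (-(z^2))))
    ((Real.continuous_exp.comp (continuous_pow 2).neg).intervalIntegrable 0 z)
    (fun x hx => by
      show Real.exp (-(z^2)) ≤ Real.exp (-(x^2))
      apply Real.exp_le_exp.2
      nlinarith [hx.1, hx.2])
  simpa using h

lemma gauss_ub {z : ℝ} (hz : 0 < z) :
    (∫ s in (0:ℝ)..z, Real.exp (-(s^2))) ≤ z := by
  have h := intervalIntegral.integral_mono_on (μ := volume) hz.le
    ((Real.continuous_exp.comp (continuous_pow 2).neg).intervalIntegrable 0 z)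
    (intervalIntegrable_const (c := (1:ℝ)))
    (fun x _ => by show Real.exp (-(x^2)) ≤ 1; exact Real.exp_le_one_iff.2 (neg_nonpos.2 (sq_nonneg x)))
  simpa using h

lemma gauss_pos {z : ℝ} (hz : 0 < z) :
    0 < ∫ s in (0:ℝ)..z, Real.exp (-(s^2)) :=
  lt_of_lt_of_le (by positivity) (gauss_lb hz)

lemma erf_tendsto_one : Tendsto erf atTop (𝓝 1) := by
  have hint : IntegrableOn (fun s : ℝ => Real.exp (-(s^2))) (Ioi 0) := by
    have := (integrable_exp_neg_mul_sq (b := 1) one_pos).integrableOn (s := Ioi (0:ℝ))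
    simpa using this
  have h := MeasureTheory.intervalIntegral_tendsto_integral_Ioi 0 hint tendsto_id
  have hval : (∫ x in Ioi (0:ℝ), Real.exp (-(x^2))) = Real.sqrt π / 2 := by
    have := integral_gaussian_Ioi 1
    simpa using this
  rw [hval] at h
  have h2 := h.const_mul (2 / Real.sqrt π)
  have : 2 / Real.sqrt π * (Real.sqrt π / 2) = 1 := by
    have : Real.sqrt π ≠ 0 := (Real.sqrt_pos.2 Real.pi_pos).ne'
    field_simp
  rw [this] at h2
  exact h2.congr (fun z => rfl)

lemma unst_eq {μ t r : ℝ} (hμ : 0 < μ) (ht : 0 < t) (hr : 0 < r) :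
    2*μ * (1/r - Real.exp (-(r^2)/(4*μ*t))
        / (Real.sqrt (μ*π*t) * erf (r / Real.sqrt (4*μ*t))))
      = 2*μ/r * (((∫ s in (0:ℝ)..(r / Real.sqrt (4*μ*t)), Real.exp (-(s^2)))
            - (r / Real.sqrt (4*μ*t)) * Real.exp (-((r / Real.sqrt (4*μ*t))^2)))
          / ∫ s in (0:ℝ)..(r / Real.sqrt (4*μ*t)), Real.exp (-(s^2))) := by
  have h4 : (0:ℝ) < 4*μ*t := by positivity
  set s4 : ℝ := Real.sqrt (4*μ*t) with hs4def
  have hs4 : 0 < s4 := Real.sqrt_pos.2 h4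
  set z : ℝ := r / s4 with hzdef
  have hz : 0 < z := div_pos hr hs4
  set N : ℝ := ∫ s in (0:ℝ)..z, Real.exp (-(s^2)) with hNdef
  have hN : 0 < N := gauss_pos hz
  have hsq : s4^2 = 4*μ*t := Real.sq_sqrt h4.le
  have hπ : (0:ℝ) < Real.sqrt π := Real.sqrt_pos.2 Real.pi_pos
  have hmt : Real.sqrt (μ*π*t) = Real.sqrt π * (s4/2) := by
    have e1 : μ*π*t = π * (μ*t) := by ring
    have e2 : (4:ℝ)*μ*t = 2^2*(μ*t) := by ring
    rw [hs4def, e1, e2, Real.sqrt_mul Real.pi_pos.le (μ*t),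
      Real.sqrt_mul (by norm_num : (0:ℝ) ≤ 2^2) (μ*t),
      Real.sqrt_sq (by norm_num : (0:ℝ) ≤ 2)]
    ring
  have h1 : Real.sqrt (μ*π*t) * erf z = s4 * N := by
    rw [hmt, erf, ← hNdef]
    field_simp
  have h2 : -(r^2)/(4*μ*t) = -(z^2) := by
    rw [hzdef, div_pow, hsq]
    field_simp
  have h3 : r = z * s4 := by
    rw [hzdef]; field_simp
  rw [h2, h1, h3]
  field_simp

lemma unst_bounds {μ t r : ℝ} (hμ : 0 < μ) (ht : 0 < t) (hr : 0 < r)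
    (hsmall : r^2 ≤ 2*μ*t) :
    0 ≤ 2*μ * (1/r - Real.exp (-(r^2)/(4*μ*t))
        / (Real.sqrt (μ*π*t) * erf (r / Real.sqrt (4*μ*t))))
    ∧ 2*μ * (1/r - Real.exp (-(r^2)/(4*μ*t))
        / (Real.sqrt (μ*π*t) * erf (r / Real.sqrt (4*μ*t)))) ≤ r/t := by
  have h4 : (0:ℝ) < 4*μ*t := by positivity
  rw [unst_eq hμ ht hr]
  set s4 : ℝ := Real.sqrt (4*μ*t) with hs4def
  have hs4 : 0 < s4 := Real.sqrt_pos.2 h4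
  set z : ℝ := r / s4 with hzdef
  have hz : 0 < z := div_pos hr hs4
  set N : ℝ := ∫ s in (0:ℝ)..z, Real.exp (-(s^2)) with hNdef
  have hN : 0 < N := gauss_pos hz
  have hsq : s4^2 = 4*μ*t := Real.sq_sqrt h4.le
  have hz2 : z^2 = r^2/(4*μ*t) := by rw [hzdef, div_pow, hsq]
  have hz2le : z^2 ≤ 1/2 := by
    rw [hz2]; rw [div_le_iff₀ h4]; nlinarith
  have hexp : 1 - z^2 ≤ Real.exp (-(z^2)) := by
    have := Real.add_one_le_exp (-(z^2)); linarith
  have hlb : z * Real.exp (-(z^2)) ≤ N := gauss_lb hz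
  have hub : N ≤ z := gauss_ub hz
  have hnum0 : 0 ≤ N - z * Real.exp (-(z^2)) := by linarith
  constructor
  · positivity
  · have hNlb : z/2 ≤ N := by nlinarith
    have hnumub : N - z * Real.exp (-(z^2)) ≤ z^3 := by nlinarith
    have hdiv : (N - z * Real.exp (-(z^2))) / N ≤ z^3 / (z/2) :=
      div_le_div₀ (by positivity) hnumub (by positivity) hNlb
    have heq : z^3 / (z/2) = 2*z^2 := by field_simp
    rw [heq] at hdiv
    calc 2*μ/r * ((N - z * Real.exp (-(z^2))) / N)
        ≤ 2*μ/r * (2*z^2) := by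
          apply mul_le_mul_of_nonneg_left hdiv (by positivity)
      _ = r/t := by rw [hz2]; field_simp; ring



theorem stmt_17 (μ : ℝ) (hμ : 0 < μ) (unst : ℝ → ℝ → ℝ)
    (hunst : ∀ t r, unst t r
      = 2*μ * (1/r - Real.exp (-(r^2)/(4*μ*t))
          / (Real.sqrt (μ*π*t) * erf (r / Real.sqrt (4*μ*t))))) :
    (∀ tb > (0:ℝ),
      Tendsto (fun q : ℝ × ℝ => unst q.1 q.2) (𝓝 tb ×ˢ 𝓝[>] 0) (𝓝 0))
    ∧ (∀ rb > (0:ℝ),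
      Tendsto (fun t : ℝ => unst t rb) (𝓝[>] 0) (𝓝 (2*μ/rb))) := by
  constructor
  · intro tb htb
    have hδ : (0:ℝ) < Real.sqrt (μ*tb) := Real.sqrt_pos.2 (by positivity)
    have h1 : ∀ᶠ q : ℝ×ℝ in 𝓝 tb ×ˢ 𝓝[>] (0:ℝ), tb/2 < q.1 :=
      tendsto_fst.eventually (eventually_gt_nhds (by linarith))
    have h2 : ∀ᶠ q : ℝ×ℝ in 𝓝 tb ×ˢ 𝓝[>] (0:ℝ), q.2 ∈ Ioo 0 (Real.sqrt (μ*tb)) :=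
      tendsto_snd.eventually (eventually_mem_set.2
        (Ioo_mem_nhdsGT_of_mem ⟨le_refl 0, hδ⟩))
    have hbd : ∀ᶠ q : ℝ×ℝ in 𝓝 tb ×ˢ 𝓝[>] (0:ℝ),
        0 ≤ unst q.1 q.2 ∧ unst q.1 q.2 ≤ q.2/q.1 := by
      filter_upwards [h1, h2] with q hq1 hq2
      have ht : 0 < q.1 := by linarith
      have hr : 0 < q.2 := hq2.1
      have hrsq : q.2^2 ≤ 2*μ*q.1 := by
        nlinarith [Real.sq_sqrt (show (0:ℝ) ≤ μ*tb by positivity), hq2.2, hq2.1]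
      rw [hunst]
      exact unst_bounds hμ ht hr hrsq
    have hdiv : Tendsto (fun q : ℝ×ℝ => q.2/q.1) (𝓝 tb ×ˢ 𝓝[>] (0:ℝ)) (𝓝 (0/tb)) :=
      Tendsto.div (tendsto_snd.mono_right nhdsWithin_le_nhds) tendsto_fst htb.ne'
    rw [zero_div] at hdiv
    exact tendsto_of_tendsto_of_tendsto_of_le_of_le' tendsto_const_nhds hdiv
      (hbd.mono fun q h => h.1) (hbd.mono fun q h => h.2)
  · intro rb hrb
    set b : ℝ := rb^2/(4*μ) with hbdef
    have hb : 0 < b := by positivity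
    have hA : Tendsto (fun u : ℝ => u ^ (1/2:ℝ) * Real.exp (-b*u)) atTop (𝓝 0) :=
      tendsto_rpow_mul_exp_neg_mul_atTop_nhds_zero _ _ hb
    have hA' : Tendsto (fun t : ℝ => (t⁻¹) ^ (1/2:ℝ) * Real.exp (-b*t⁻¹))
        (𝓝[>] (0:ℝ)) (𝓝 0) := hA.comp tendsto_inv_nhdsGT_zero
    have hs : Tendsto (fun t : ℝ => Real.sqrt (4*μ*t)) (𝓝[>] (0:ℝ)) (𝓝[>] (0:ℝ)) := by
      apply tendsto_nhdsWithin_of_tendsto_nhds_of_eventually_within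
      · have hc : Continuous fun t : ℝ => Real.sqrt (4*μ*t) :=
          (continuous_const.mul continuous_id).sqrt
        have := (hc.tendsto 0).mono_left (nhdsWithin_le_nhds (s := Ioi (0:ℝ)))
        simpa using this
      · filter_upwards [self_mem_nhdsWithin] with t ht
        have ht' : (0:ℝ) < t := ht
        exact Real.sqrt_pos.2 (by positivity)
    have hq : Tendsto (fun x : ℝ => rb / x) (𝓝[>] (0:ℝ)) atTop := by
      simpa [div_eq_mul_inv] using tendsto_inv_nhdsGT_zero.const_mul_atTop hrb
    have herf : Tendsto (fun t : ℝ => erf (rb / Real.sqrt (4*μ*t))) (𝓝[>] (0:ℝ)) (𝓝 1) :=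
      erf_tendsto_one.comp (hq.comp hs)
    have hE : (fun t : ℝ => (Real.sqrt (μ*π))⁻¹ * ((t⁻¹) ^ (1/2:ℝ) * Real.exp (-b*t⁻¹))
              * (erf (rb / Real.sqrt (4*μ*t)))⁻¹)
        =ᶠ[𝓝[>] (0:ℝ)] (fun t : ℝ =>
          Real.exp (-(rb^2)/(4*μ*t)) / (Real.sqrt (μ*π*t) * erf (rb / Real.sqrt (4*μ*t)))) := by
      filter_upwards [self_mem_nhdsWithin] with t ht
      have ht : 0 < t := ht
      have hsq : Real.sqrt (μ*π*t) = Real.sqrt (μ*π) * Real.sqrt t := by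
        rw [show μ*π*t = (μ*π)*t by ring, Real.sqrt_mul (by positivity)]
      have h1 : (t⁻¹) ^ (1/2:ℝ) = (Real.sqrt t)⁻¹ := by
        rw [← Real.sqrt_eq_rpow, Real.sqrt_inv]
      have h2 : -(rb^2)/(4*μ*t) = -b*t⁻¹ := by
        rw [hbdef]; field_simp
      rw [h1, h2, hsq]
      simp only [div_eq_mul_inv, mul_inv]
      ring
    have hlim : Tendsto (fun t : ℝ =>
        (Real.sqrt (μ*π))⁻¹ * ((t⁻¹) ^ (1/2:ℝ) * Real.exp (-b*t⁻¹))
          * (erf (rb / Real.sqrt (4*μ*t)))⁻¹) (𝓝[>] (0:ℝ))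
        (𝓝 ((Real.sqrt (μ*π))⁻¹ * 0 * 1⁻¹)) :=
      (hA'.const_mul _).mul (herf.inv₀ one_ne_zero)
    have key : Tendsto (fun t : ℝ => Real.exp (-(rb^2)/(4*μ*t))
        / (Real.sqrt (μ*π*t) * erf (rb / Real.sqrt (4*μ*t)))) (𝓝[>] (0:ℝ)) (𝓝 0) := by
      have := Filter.Tendsto.congr' hE hlim
      simpa using this
    have hfin := ((tendsto_const_nhds (x := 1/rb) (f := 𝓝[>] (0:ℝ))).sub key).const_mul (2*μ)
    have hval : 2*μ*(1/rb - 0) = 2*μ/rb := by ring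
    rw [hval] at hfin
    exact hfin.congr fun t => (hunst t rb).symm
end

section
/- Let μ > 0 and 1 ≤ p < 3. Define u_nst(t,r) = 2μ(1/r − exp(−r²/(4μt))/(√(μπt)erf(r/√(4μt)))) and u_st(r) = 2μ/r. Then ∫₀^∞ |u_nst(t,r) − u_st(r)|^p r² dr → 0 as t → 0+. -/
open Real Filter Topology MeasureTheory Set

theorem stmt_18 (μ p : ℝ) (hμ : 0 < μ) (hp1 : 1 ≤ p) (hp3 : p < 3)
    (unst : ℝ → ℝ → ℝ)
    (hunst : ∀ t r, unst t r
      = 2*μ * (1/r - Real.exp (-(r^2)/(4*μ*t))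
          / (Real.sqrt (μ*π*t) * erf (r / Real.sqrt (4*μ*t))))) :
    Tendsto (fun t : ℝ => ∫ r in Ioi (0:ℝ), |unst t r - 2*μ/r| ^ p * r^2)
      (𝓝[>] 0) (𝓝 0) := by
  have hπ : (0:ℝ) < π := Real.pi_pos
  set q : ℝ := (3 - p) / 2 with hqdef
  have hq0 : 0 < q := by rw [hqdef]; linarith
  set G : ℝ → ℝ := fun s => |2*μ * (Real.exp (-(s^2)) / (Real.sqrt (μ*π) * erf s))| ^ p * s^2
    with hGdef
  set J : ℝ := ∫ s in Ioi (0:ℝ), G s with hJdef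
  set K : ℝ := 4*μ*Real.sqrt (4*μ) * J with hKdef
  have key : ∀ t ∈ Ioi (0:ℝ),
      (∫ r in Ioi (0:ℝ), |unst t r - 2*μ/r| ^ p * r^2) = K * t ^ q := by
    intro t ht
    have ht0 : (0:ℝ) < t := ht
    set c : ℝ := Real.sqrt (4*μ*t) with hcdef
    have hc : 0 < c := Real.sqrt_pos.mpr (by positivity)
    have hc2 : c^2 = 4*μ*t := Real.sq_sqrt (by positivity)
    have hsplit : Real.sqrt (μ*π*t) = Real.sqrt (μ*π) * Real.sqrt t :=
      Real.sqrt_mul (by positivity) t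
    have step1 : (∫ r in Ioi (0:ℝ), |unst t r - 2*μ/r| ^ p * r^2)
        = ∫ r in Ioi (0:ℝ), (4*μ*t / Real.sqrt t ^ p) * G (c⁻¹ * r) := by
      refine setIntegral_congr_fun measurableSet_Ioi ?_
      intro r hr
      obtain ⟨s, rfl⟩ : ∃ s, r = c * s := ⟨c⁻¹ * r, by field_simp⟩
      simp only [hGdef]
      rw [show c⁻¹ * (c * s) = s by field_simp]
      have harg : -((c*s)^2)/(4*μ*t) = -(s^2) := by
        rw [mul_pow, hc2]; field_simp
      have hdivc : c * s / c = s := by field_simp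
      rw [hunst, ← hcdef, hdivc, harg, hsplit]
      have hstep : 2*μ*(1/(c*s) - Real.exp (-(s^2)) / (Real.sqrt (μ*π) * Real.sqrt t * erf s))
            - 2*μ/(c*s)
          = -((2*μ * (Real.exp (-(s^2)) / (Real.sqrt (μ*π) * erf s))) / Real.sqrt t) := by
        ring
      rw [hstep, abs_neg, abs_div, abs_of_nonneg (Real.sqrt_nonneg t),
        Real.div_rpow (abs_nonneg _) (Real.sqrt_nonneg t), mul_pow, hc2]
      ring
    rw [step1, MeasureTheory.integral_const_mul,
      MeasureTheory.integral_comp_mul_left_Ioi G 0 (inv_pos.mpr hc)]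
    simp only [mul_zero, inv_inv, smul_eq_mul]
    rw [← hJdef]
    have hc4 : c = Real.sqrt (4*μ) * Real.sqrt t := by
      rw [hcdef, Real.sqrt_mul (by positivity) t]
    have h32 : t * Real.sqrt t = t ^ ((3:ℝ)/2) := by
      rw [show ((3:ℝ)/2) = 1 + 1/2 by norm_num, Real.rpow_add ht0, Real.rpow_one,
        Real.sqrt_eq_rpow]
    have hsp : Real.sqrt t ^ p = t ^ (p/2) := by
      rw [Real.sqrt_eq_rpow, ← Real.rpow_mul ht0.le]
      congr 1
      ring
    have hpow : t * Real.sqrt t / Real.sqrt t ^ p = t ^ q := by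
      rw [h32, hsp, ← Real.rpow_sub ht0, hqdef]
      congr 1
      ring
    rw [hc4, ← hpow, hKdef]
    ring
  have h1 : Tendsto (fun u : ℝ => u ^ q) (𝓝[>] (0:ℝ)) (𝓝 0) := by
    have h := (Real.continuousAt_rpow_const 0 q (Or.inr hq0.le)).tendsto
    rw [Real.zero_rpow hq0.ne'] at h
    exact h.mono_left nhdsWithin_le_nhds
  have h2 := h1.const_mul K
  rw [mul_zero] at h2
  exact Tendsto.congr' (eventually_of_mem self_mem_nhdsWithin fun t ht => (key t ht).symm) h2
end

section
/- Let n ≥ 2, μ > 0, a > 0, and define ū(t,r) = r/(t·f(t,r)) with f(t,r) = 1 + a(4πμt)^{n/2}exp(r²/(4μt)). If 1 ≤ p < n/2, then ∫₀^∞ (|ū_r(t,r)|^p + |ū(t,r)/r|^p)·r^{n-1} dr → 0 as t → 0+. -/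
open Real Filter Topology MeasureTheory Set

/-!
Write `ū(t, r) = r / (t f)` with `f = 1 + Z`, `Z = b t^{n/2} exp (r² / (4 μ t))`. Then
`ū / r = 1 / (t f)` and `|ū_r| ≤ (1 + r² / (2 μ t)) / (t f)`, so the integrand is bounded by
multiples of `t^{-p} r^{n-1} / f^p` and `t^{-2p} r^{2p+n-1} / f^p`. For `θ ∈ (0, 1]` we have
`f ≥ Z^θ`, so `f^{-p}` is a Gaussian in `r` times `t^{-θ p n / 2}`; integrating, each term is
`O(t^{n/2 - p - θ p n / 2})`, which tends to `0` once `θ` is small, because `p < n / 2`.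
-/

-- the paper's `f(t, r)`, with `b = a (4πμ)^{n/2}`, `κ = n / 2`, `σ = 4μ`
noncomputable def heatProfile (b κ σ t r : ℝ) : ℝ := 1 + b * t ^ κ * exp (r ^ 2 / (σ * t))

lemma Real.rpow_le_one_add {z θ : ℝ} (hz : 0 ≤ z) (hθ₀ : 0 ≤ θ) (hθ₁ : θ ≤ 1) :
    z ^ θ ≤ 1 + z := by
  rcases le_total z 1 with h | h
  · linarith [rpow_le_one hz h hθ₀]
  · linarith [(rpow_le_rpow_of_exponent_le h hθ₁).trans_eq (rpow_one z)]

lemma Real.rpow_add_le_mul_rpow_add_rpow {x y p : ℝ} (hx : 0 ≤ x) (hy : 0 ≤ y) (hp : 1 ≤ p) :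
    (x + y) ^ p ≤ 2 ^ (p - 1) * (x ^ p + y ^ p) := by
  lift x to NNReal using hx
  lift y to NNReal using hy
  exact_mod_cast NNReal.rpow_add_le_mul_rpow_add_rpow x y hp

lemma Real.integral_rpow_mul_exp_neg_mul_sq {β c : ℝ} (hβ : 0 < β) (hc : -1 < c) :
    ∫ r in Ioi (0:ℝ), r ^ c * exp (-β * r ^ 2)
      = β ^ (-(c + 1) / 2) * (1 / 2) * Gamma ((c + 1) / 2) := by
  rw [← integral_rpow_mul_exp_neg_mul_rpow two_pos hc hβ]
  refine setIntegral_congr_fun measurableSet_Ioi fun r _ => ?_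
  norm_num [rpow_natCast]

section heatProfile

variable {b κ σ t : ℝ}

lemma one_le_heatProfile (hb : 0 ≤ b) (ht : 0 < t) (r : ℝ) : 1 ≤ heatProfile b κ σ t r := by
  unfold heatProfile
  have : 0 ≤ b * t ^ κ * exp (r ^ 2 / (σ * t)) := by positivity
  linarith

lemma heatProfile_pos (hb : 0 ≤ b) (ht : 0 < t) (r : ℝ) : 0 < heatProfile b κ σ t r :=
  zero_lt_one.trans_le (one_le_heatProfile hb ht r)

lemma hasDerivAt_heatProfile (r : ℝ) :
    HasDerivAt (heatProfile b κ σ t)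
      (b * t ^ κ * exp (r ^ 2 / (σ * t)) * (2 * r / (σ * t))) r := by
  have h := (((hasDerivAt_pow 2 r).div_const (σ * t)).exp.const_mul (b * t ^ κ)).const_add 1
  exact h.congr_deriv (by push_cast; ring)

lemma abs_deriv_div_heatProfile_le (hb : 0 ≤ b) (hσ : 0 < σ) (ht : 0 < t) (r : ℝ) :
    |deriv (fun ρ => ρ / (t * heatProfile b κ σ t ρ)) r|
      ≤ (1 + 2 * r ^ 2 / (σ * t)) / (t * heatProfile b κ σ t r) := by
  set F := heatProfile b κ σ t r
  set Z := b * t ^ κ * exp (r ^ 2 / (σ * t))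
  have hF : 1 ≤ F := one_le_heatProfile hb ht r
  have hZ : 0 ≤ Z := by positivity
  have hZF : Z / F ≤ 1 := (div_le_one (by linarith)).2 (by simp only [F, Z, heatProfile]; linarith)
  have hx : 0 ≤ 2 * r ^ 2 / (σ * t) := by positivity
  have hderiv : deriv (fun ρ => ρ / (t * heatProfile b κ σ t ρ)) r
      = (1 - Z / F * (2 * r ^ 2 / (σ * t))) / (t * F) := by
    have hu : HasDerivAt (fun ρ => ρ / (t * heatProfile b κ σ t ρ))
        ((1 * (t * F) - r * (t * (Z * (2 * r / (σ * t))))) / (t * F) ^ 2) r :=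
      (hasDerivAt_id' r).div ((hasDerivAt_heatProfile r).const_mul t) (by positivity)
    rw [hu.deriv]
    field_simp
  rw [hderiv, abs_div, abs_of_pos (by positivity : 0 < t * F)]
  gcongr
  rw [abs_le]
  constructor <;> nlinarith [div_nonneg hZ (by linarith : (0:ℝ) ≤ F)]

lemma radial_energy_density_le (hb : 0 ≤ b) (hσ : 0 < σ) (ht : 0 < t) {p : ℝ} (hp : 1 ≤ p)
    {r : ℝ} (hr : 0 < r) (m : ℝ) :
    (|deriv (fun ρ => ρ / (t * heatProfile b κ σ t ρ)) r| ^ p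
        + |r / (t * heatProfile b κ σ t r) / r| ^ p) * r ^ m
      ≤ 2 ^ p * (t ^ (-p) * (r ^ m / heatProfile b κ σ t r ^ p))
        + 2 ^ p * (2 / σ) ^ p
          * (t ^ (-(2 * p)) * (r ^ (2 * p + m) / heatProfile b κ σ t r ^ p)) := by
  set F := heatProfile b κ σ t r
  have hF : 0 < F := heatProfile_pos hb ht r
  set x := 2 * r ^ 2 / (σ * t)
  have hx : 0 ≤ x := by positivity
  have hp₀ : 0 ≤ p := by linarith
  have hradial : |r / (t * F) / r| ≤ (1 + x) / (t * F) := by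
    rw [div_div_cancel_left' hr.ne', abs_of_pos (by positivity), inv_eq_one_div]
    gcongr
    linarith
  have hsum : |deriv (fun ρ => ρ / (t * heatProfile b κ σ t ρ)) r| ^ p + |r / (t * F) / r| ^ p
      ≤ 2 * ((1 + x) / (t * F)) ^ p := by
    have := rpow_le_rpow (abs_nonneg _) (abs_deriv_div_heatProfile_le (κ := κ) hb hσ ht r) hp₀
    have := rpow_le_rpow (abs_nonneg _) hradial hp₀
    linarith
  have hconvex : (1 + x) ^ p ≤ 2 ^ (p - 1) * (1 + x ^ p) := by
    simpa using rpow_add_le_mul_rpow_add_rpow zero_le_one hx hp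
  have hxp : x ^ p = (2 / σ) ^ p * r ^ (2 * p) * (t ^ p)⁻¹ := by
    rw [show x = 2 / σ * r ^ (2:ℝ) * t⁻¹ by simp only [x, rpow_two]; field_simp,
      mul_rpow (by positivity) (by positivity), mul_rpow (by positivity) (by positivity),
      ← rpow_mul hr.le, inv_rpow ht.le, mul_comm (2:ℝ) p]
  have h2p : (2:ℝ) ^ p = 2 * 2 ^ (p - 1) := by
    rw [rpow_sub two_pos, rpow_one]; field_simp
  calc _ ≤ 2 * ((1 + x) / (t * F)) ^ p * r ^ m := by gcongr
    _ = 2 * (1 + x) ^ p / (t ^ p * F ^ p) * r ^ m := by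
      rw [div_rpow (by positivity) (by positivity), mul_rpow ht.le hF.le, mul_div_assoc]
    _ ≤ 2 * (2 ^ (p - 1) * (1 + x ^ p)) / (t ^ p * F ^ p) * r ^ m := by gcongr
    _ = _ := by
      rw [hxp, h2p, rpow_neg ht.le, rpow_neg ht.le, rpow_add hr,
        show t ^ (2 * p) = t ^ p * t ^ p by rw [two_mul, rpow_add ht]]
      field_simp

lemma rpow_div_heatProfile_rpow_le (hb : 0 < b) (ht : 0 < t) {q θ : ℝ} (hq : 0 ≤ q)
    (hθ₀ : 0 ≤ θ) (hθ₁ : θ ≤ 1) (c : ℝ) {r : ℝ} (hr : 0 ≤ r) :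
    r ^ c / heatProfile b κ σ t r ^ q
      ≤ (b * t ^ κ) ^ (-(θ * q)) * (r ^ c * exp (-(θ * q / σ / t) * r ^ 2)) := by
  set Z := b * t ^ κ * exp (r ^ 2 / (σ * t))
  have hZ : 0 < Z := by positivity
  have hZF : Z ^ (θ * q) ≤ heatProfile b κ σ t r ^ q := by
    rw [rpow_mul hZ.le]
    exact rpow_le_rpow (by positivity) (rpow_le_one_add hZ.le hθ₀ hθ₁) hq
  have hZpow : Z ^ (-(θ * q)) = (b * t ^ κ) ^ (-(θ * q)) * exp (-(θ * q / σ / t) * r ^ 2) := by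
    rw [mul_rpow (by positivity) (exp_pos _).le, ← exp_mul]
    congr 2
    field_simp
  calc r ^ c / heatProfile b κ σ t r ^ q ≤ r ^ c / Z ^ (θ * q) := by gcongr
    _ = (b * t ^ κ) ^ (-(θ * q)) * (r ^ c * exp (-(θ * q / σ / t) * r ^ 2)) := by
      rw [div_eq_mul_inv, ← rpow_neg hZ.le, hZpow]
      ring

lemma integrableOn_rpow_div_heatProfile_rpow (hb : 0 < b) (hσ : 0 < σ) (ht : 0 < t) {q c : ℝ}
    (hq : 0 < q) (hc : -1 < c) :
    IntegrableOn (fun r => r ^ c / heatProfile b κ σ t r ^ q) (Ioi 0) := by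
  refine Integrable.mono' (((integrableOn_rpow_mul_exp_neg_mul_sq (b := 1 * q / σ / t)
    (by positivity) hc).const_mul ((b * t ^ κ) ^ (-(1 * q))))) ?_ ?_
  · exact (by unfold heatProfile; fun_prop :
      Measurable fun r => r ^ c / heatProfile b κ σ t r ^ q).aestronglyMeasurable
  · filter_upwards [self_mem_ae_restrict measurableSet_Ioi] with r (hr : 0 < r)
    have := heatProfile_pos (κ := κ) (σ := σ) hb.le ht r
    rw [norm_of_nonneg (by positivity)]
    exact rpow_div_heatProfile_rpow_le hb ht hq.le zero_le_one le_rfl c hr.le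

lemma integral_rpow_div_heatProfile_rpow_le (hb : 0 < b) (hσ : 0 < σ) (ht : 0 < t) {q θ c : ℝ}
    (hq : 0 < q) (hθ₀ : 0 < θ) (hθ₁ : θ ≤ 1) (hc : -1 < c) :
    ∫ r in Ioi 0, r ^ c / heatProfile b κ σ t r ^ q
      ≤ b ^ (-(θ * q)) * (θ * q / σ) ^ (-(c + 1) / 2) * (1 / 2) * Gamma ((c + 1) / 2)
        * t ^ ((c + 1) / 2 - κ * θ * q) := by
  have hβ : 0 < θ * q / σ / t := by positivity
  calc ∫ r in Ioi 0, r ^ c / heatProfile b κ σ t r ^ q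
      ≤ ∫ r in Ioi 0, (b * t ^ κ) ^ (-(θ * q)) * (r ^ c * exp (-(θ * q / σ / t) * r ^ 2)) := by
        refine setIntegral_mono_on (integrableOn_rpow_div_heatProfile_rpow hb hσ ht hq hc)
          ((integrableOn_rpow_mul_exp_neg_mul_sq hβ hc).const_mul _) measurableSet_Ioi
          fun r hr => rpow_div_heatProfile_rpow_le hb ht hq.le hθ₀.le hθ₁ c (le_of_lt hr)
    _ = _ := by
      rw [integral_const_mul, integral_rpow_mul_exp_neg_mul_sq hβ hc,
        mul_rpow hb.le (rpow_nonneg ht.le _), ← rpow_mul ht.le, div_rpow (by positivity) ht.le,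
        div_eq_mul_inv _ (t ^ _), ← rpow_neg ht.le, sub_eq_add_neg ((c + 1) / 2),
        rpow_add ht]
      ring_nf

theorem tendsto_rpow_mul_integral_rpow_div_heatProfile_rpow (hb : 0 < b) (hσ : 0 < σ)
    {q c d : ℝ} (hq : 0 < q) (hc : -1 < c) (hd : 0 < d + (c + 1) / 2) :
    Tendsto (fun t => t ^ d * ∫ r in Ioi 0, r ^ c / heatProfile b κ σ t r ^ q)
      (𝓝[>] 0) (𝓝 0) := by
  -- any `θ ∈ (0, 1]` with `κ θ q < d + (c + 1) / 2` leaves a positive power of `t`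
  obtain ⟨θ', hθ'₀, hθ'⟩ := exists_pos_mul_lt hd |κ * q|
  set θ := min 1 θ'
  have hθ₀ : 0 < θ := lt_min one_pos hθ'₀
  have hexp : 0 < d + ((c + 1) / 2 - κ * θ * q) := by
    have : κ * θ * q ≤ |κ * q| * θ' := by
      calc κ * θ * q = κ * q * θ := by ring
        _ ≤ |κ * q| * θ := by gcongr; exact le_abs_self _
        _ ≤ |κ * q| * θ' := by gcongr; exact min_le_right _ _
    linarith
  set K := b ^ (-(θ * q)) * (θ * q / σ) ^ (-(c + 1) / 2) * (1 / 2) * Gamma ((c + 1) / 2)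
  have hpow : Tendsto (fun t : ℝ => K * t ^ (d + ((c + 1) / 2 - κ * θ * q))) (𝓝[>] 0) (𝓝 0) := by
    have h := ((continuousAt_rpow_const 0 _ (Or.inr hexp.le)).tendsto.const_mul K).mono_left
      (nhdsWithin_le_nhds (s := Ioi 0))
    simpa [zero_rpow hexp.ne'] using h
  refine squeeze_zero' ?_ ?_ hpow
  · filter_upwards [self_mem_nhdsWithin] with t (ht : 0 < t)
    refine mul_nonneg (rpow_nonneg ht.le d) (setIntegral_nonneg measurableSet_Ioi fun r hr => ?_)
    have := heatProfile_pos (κ := κ) (σ := σ) hb.le ht r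
    have : (0:ℝ) < r := hr
    positivity
  · filter_upwards [self_mem_nhdsWithin] with t (ht : 0 < t)
    calc _ ≤ t ^ d * (K * t ^ ((c + 1) / 2 - κ * θ * q)) := by
          gcongr
          exact integral_rpow_div_heatProfile_rpow_le hb hσ ht hq hθ₀ (min_le_left _ _) hc
      _ = _ := by rw [rpow_add ht]; ring

lemma integral_radial_energy_density_le (hb : 0 < b) (hσ : 0 < σ) (ht : 0 < t) {p m : ℝ}
    (hp : 1 ≤ p) (hm : -1 < m) :
    ∫ r in Ioi 0, (|deriv (fun ρ => ρ / (t * heatProfile b κ σ t ρ)) r| ^ p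
        + |r / (t * heatProfile b κ σ t r) / r| ^ p) * r ^ m
      ≤ 2 ^ p * (t ^ (-p) * ∫ r in Ioi 0, r ^ m / heatProfile b κ σ t r ^ p)
        + 2 ^ p * (2 / σ) ^ p
          * (t ^ (-(2 * p)) * ∫ r in Ioi 0, r ^ (2 * p + m) / heatProfile b κ σ t r ^ p) := by
  have hp₀ : 0 < p := by linarith
  have h₁ :=
    (integrableOn_rpow_div_heatProfile_rpow (κ := κ) hb hσ ht hp₀ hm).const_mul (t ^ (-p))
  have h₂ := (integrableOn_rpow_div_heatProfile_rpow (κ := κ) hb hσ ht hp₀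
    (by linarith : -1 < 2 * p + m)).const_mul (t ^ (-(2 * p)))
  rw [← integral_const_mul, ← integral_const_mul, ← integral_const_mul, ← integral_const_mul,
    ← integral_add (h₁.const_mul _) (h₂.const_mul _)]
  refine integral_mono_of_nonneg ?_ ((h₁.const_mul _).add (h₂.const_mul _)) ?_
  · filter_upwards [self_mem_ae_restrict measurableSet_Ioi] with r (hr : 0 < r)
    positivity
  · filter_upwards [self_mem_ae_restrict measurableSet_Ioi] with r (hr : 0 < r)
    exact radial_energy_density_le hb.le hσ ht hp hr m

end heatProfile

theorem stmt_19_general (n : ℕ) (μ a p : ℝ) (hμ : 0 < μ) (ha : 0 < a)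
    (hp1 : 1 ≤ p) (hpn : p < (n:ℝ)/2)
    (ubar : ℝ → ℝ → ℝ)
    (hubar : ∀ t r, ubar t r
      = r / (t * (1 + a * (4*π*μ*t) ^ ((n:ℝ)/2) * Real.exp (r^2/(4*μ*t))))) :
    Tendsto (fun t : ℝ =>
        ∫ r in Ioi (0:ℝ),
          (|deriv (fun ρ => ubar t ρ) r| ^ p + |ubar t r / r| ^ p) * r ^ ((n:ℝ)-1))
      (𝓝[>] 0) (𝓝 0) := by
  set b := a * (4 * π * μ) ^ ((n:ℝ) / 2)
  have hb : 0 < b := by positivity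
  have hσ : 0 < 4 * μ := by positivity
  have hu : ∀ t > 0, ubar t = fun ρ => ρ / (t * heatProfile b ((n:ℝ) / 2) (4 * μ) t ρ) :=
    fun t ht => funext fun ρ => by
      rw [hubar, heatProfile, mul_rpow (by positivity) ht.le, ← mul_assoc a]
  have h₁ := tendsto_rpow_mul_integral_rpow_div_heatProfile_rpow (κ := (n:ℝ) / 2) hb hσ
    (by linarith : 0 < p) (c := (n:ℝ) - 1) (d := -p) (by linarith) (by linarith)
  have h₂ := tendsto_rpow_mul_integral_rpow_div_heatProfile_rpow (κ := (n:ℝ) / 2) hb hσ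
    (by linarith : 0 < p) (c := 2 * p + ((n:ℝ) - 1)) (d := -(2 * p)) (by linarith) (by linarith)
  have hbound := (h₁.const_mul (2 ^ p)).add (h₂.const_mul (2 ^ p * (2 / (4 * μ)) ^ p))
  rw [mul_zero, mul_zero, add_zero] at hbound
  refine squeeze_zero' ?_ ?_ hbound
  · filter_upwards [self_mem_nhdsWithin] with t (ht : 0 < t)
    exact setIntegral_nonneg measurableSet_Ioi fun r (hr : 0 < r) => by positivity
  · filter_upwards [self_mem_nhdsWithin] with t (ht : 0 < t)
    simp only [hu t ht]
    exact integral_radial_energy_density_le hb hσ ht hp1 (by linarith)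

theorem stmt_19 (n : ℕ) (hn : 2 ≤ n) (μ a p : ℝ) (hμ : 0 < μ) (ha : 0 < a)
    (hp1 : 1 ≤ p) (hpn : p < (n:ℝ)/2)
    (ubar : ℝ → ℝ → ℝ)
    (hubar : ∀ t r, ubar t r
      = r / (t * (1 + a * (4*π*μ*t) ^ ((n:ℝ)/2) * Real.exp (r^2/(4*μ*t))))) :
    Tendsto (fun t : ℝ =>
        ∫ r in Ioi (0:ℝ),
          (|deriv (fun ρ => ubar t ρ) r| ^ p + |ubar t r / r| ^ p) * r ^ ((n:ℝ)-1))
      (𝓝[>] 0) (𝓝 0) :=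
  stmt_19_general n μ a p hμ ha hp1 hpn ubar hubar
end
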